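/- arXiv:2306.10603 — 7 statements merged into one kernel-verified Lean document; each statement's English description precedes it below -/
import Mathlib

section
/- Let H = Σ_{γ=1}^{Γ} H_γ be a Hamiltonian consisting of Γ Hermitian summands, and let S_2(t) = e^{-itH_1/2} ··· e^{-itH_Γ/2} · e^{-itH_Γ/2} ··· e^{-itH_1/2} be the second-order Suzuki (Strang) formula. Then for all t ≥ 0, ‖S_2(t) − e^{-itH}‖ ≤ (t³/12) Σ_{γ1=1}^{Γ} ‖[ Σ_{γ3=γ1+1}^{Γ} H_{γ3}, [ Σ_{γ2=γ1+1}^{Γ} H_{γ2}, H_{γ1} ] ]‖ + (t³/24) Σ_{γ1=1}^{Γ} ‖[ H_{γ1}, [ Σ_{γ2=γ1+1}^{Γ} H_{γ2}, H_{γ1} ] ]‖. -/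
/-!
For skew-adjoint `X`, `Y` in a C⋆-algebra let `S(s) = e^{sX} e^{sY} e^{sX}` and `W = 2X + Y`. Then
`S' = (W + R(s)) S` with `R(s) = (e^{sX} Y e^{-sX} - Y) + (e^{sX} e^{sY} X e^{-sY} e^{-sX} - X)`.
The first-order parts `s⁅X, Y⁆` and `s⁅Y, X⁆` of the two brackets cancel, and since the
derivative of a conjugation `e^{sX} C e^{-sX}` is the conjugated commutator, which has the same
norm, Taylor's formula gives `‖R(s)‖ ≤ s²/2 (‖⁅X, ⁅Y, X⁆⁆‖ + ‖⁅Y, ⁅Y, X⁆⁆‖)`. As unitaries are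
isometries, `‖S(1) - e^W‖ ≤ ∫₀¹ ‖R‖ ≤ (‖⁅X, ⁅Y, X⁆⁆‖ + ‖⁅Y, ⁅Y, X⁆⁆‖) / 6`.

The `Γ`-term formula is `e^{X₁} S' e^{X₁}` with `S'` the formula for `H₂, …, H_Γ`, so replacing
`S'` by its exact evolution `e^Y` costs the error of `S'` plus the two-term error for `X₁, Y`;
induction and `X_γ = -itH_γ/2` give the constants.
-/

open NormedSpace Finset

theorem norm_le_of_norm_deriv_le_mul_pow {F : Type*} [NormedAddCommGroup F] [NormedSpace ℝ F]
    {f f' : ℝ → F} (hf : ∀ s, HasDerivAt f (f' s) s) (hf0 : f 0 = 0) {c : ℝ} {n : ℕ}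
    (hf' : ∀ s, 0 ≤ s → ‖f' s‖ ≤ c * s ^ n) {t : ℝ} (ht : 0 ≤ t) :
    ‖f t‖ ≤ c * t ^ (n + 1) / (n + 1) := by
  have hB (s : ℝ) : HasDerivAt (fun s : ℝ => c * s ^ (n + 1) / (n + 1)) (c * s ^ n) s := by
    refine (((hasDerivAt_pow (n + 1) s).const_mul c).div_const ((n : ℝ) + 1)).congr_deriv ?_
    simp only [Nat.add_sub_cancel]
    push_cast
    field_simp
  exact image_norm_le_of_norm_deriv_right_le_deriv_boundary
    (fun s _ => (hf s).continuousAt.continuousWithinAt) (fun s _ => (hf s).hasDerivWithinAt)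
    (by simp [hf0]) hB (fun s hs => hf' s hs.1) ⟨ht, le_rfl⟩

def palindromicProd {M : Type*} [Monoid M] (f : ℕ → M) (n : ℕ) : M :=
  ((List.range n).map fun m => f (m + 1)).prod * ((List.range n).map fun m => f (n - m)).prod

theorem palindromicProd_succ {M : Type*} [Monoid M] (f : ℕ → M) (n : ℕ) :
    palindromicProd f (n + 1) = f 1 * palindromicProd (fun k => f (k + 1)) n * f 1 := by
  have hrev : ((List.range n).map fun m => f (n + 1 - m)) =
      (List.range n).map fun m => f (n - m + 1) :=
    List.map_congr_left fun m hm => by rw [Nat.sub_add_comm (List.mem_range.mp hm).le]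
  rw [palindromicProd, palindromicProd, List.prod_range_succ', List.prod_range_succ,
    Nat.add_sub_cancel_left, hrev]
  simp only [mul_assoc]

theorem Finset.sum_Icc_add_one_add_one {M : Type*} [AddCommMonoid M] (f : ℕ → M) (a b : ℕ) :
    ∑ k ∈ Icc (a + 1) (b + 1), f k = ∑ k ∈ Icc a b, f (k + 1) := by
  rw [← map_add_right_Icc, sum_map]
  rfl

theorem Finset.sum_Icc_one_add_one {M : Type*} [AddCommMonoid M] (f : ℕ → M) (n : ℕ) :
    ∑ k ∈ Icc 1 (n + 1), f k = f 1 + ∑ k ∈ Icc 1 n, f (k + 1) := by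
  rw [← add_sum_Ioc_eq_sum_Icc (by omega), ← Icc_add_one_left_eq_Ioc, sum_Icc_add_one_add_one]

namespace CStarAlgebra

attribute [local instance] LieRing.ofAssociativeRing

variable {A : Type*} [CStarAlgebra A]

theorem exp_mem_unitary {X : A} (hX : X ∈ skewAdjoint A) : exp X ∈ unitary A :=
  let +nondep : NormedAlgebra ℚ A := .restrictScalars ℚ ℂ A
  exp_mem_unitary_of_mem_skewAdjoint hX

theorem exp_smul_mem_unitary {X : A} (hX : X ∈ skewAdjoint A) (s : ℝ) :
    exp (s • X) ∈ unitary A :=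
  exp_mem_unitary (skewAdjoint.smul_mem s hX)

theorem exp_neg_smul_mem_unitary {X : A} (hX : X ∈ skewAdjoint A) (s : ℝ) :
    exp (-(s • X)) ∈ unitary A :=
  exp_mem_unitary (neg_mem (skewAdjoint.smul_mem s hX))

theorem exp_neg_mul_exp (X : A) : exp (-X) * exp X = 1 := by
  let +nondep : NormedAlgebra ℚ A := .restrictScalars ℚ ℂ A
  rw [← exp_add_of_commute (Commute.refl _).neg_left, neg_add_cancel, exp_zero]

theorem exp_mul_exp_neg (X : A) : exp X * exp (-X) = 1 := by
  let +nondep : NormedAlgebra ℚ A := .restrictScalars ℚ ℂ A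
  rw [← exp_add_of_commute (Commute.refl _).neg_right, add_neg_cancel, exp_zero]

theorem hasDerivAt_exp_neg_smul (X : A) (s : ℝ) :
    HasDerivAt (fun s : ℝ => exp (-(s • X))) (exp (-(s • X)) * -X) s := by
  simpa only [smul_neg] using hasDerivAt_exp_smul_const (-X) s

noncomputable def expConj (X : A) (s : ℝ) (C : A) : A := exp (s • X) * C * exp (-(s • X))

theorem hasDerivAt_expConj (X C : A) (s : ℝ) :
    HasDerivAt (fun s => expConj X s C) (expConj X s ⁅X, C⁆) s := by
  have hcomm : Commute X (exp (-(s • X))) :=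
    ((Commute.refl X).smul_right s).neg_right.exp_right
  refine (((hasDerivAt_exp_smul_const X s).mul_const C).mul
    (hasDerivAt_exp_neg_smul X s)).congr_deriv ?_
  rw [expConj, Ring.lie_def, mul_neg, ← hcomm.eq]
  noncomm_ring

theorem norm_expConj {X : A} (hX : X ∈ skewAdjoint A) (s : ℝ) (C : A) :
    ‖expConj X s C‖ = ‖C‖ := by
  rw [expConj, CStarRing.norm_mul_mem_unitary _ (exp_neg_smul_mem_unitary hX s),
    CStarRing.norm_mem_unitary_mul _ (exp_smul_mem_unitary hX s)]

@[simp] theorem expConj_zero (X C : A) : expConj X 0 C = C := by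
  simp [expConj]

theorem expConj_self (X : A) (s : ℝ) : expConj X s X = X := by
  rw [expConj, ← ((Commute.refl X).smul_right s).exp_right.eq, mul_assoc,
    exp_mul_exp_neg, mul_one]

@[simp] theorem expConj_sub (X : A) (s : ℝ) (C D : A) :
    expConj X s (C - D) = expConj X s C - expConj X s D := by
  simp only [expConj, mul_sub, sub_mul]

@[simp] theorem expConj_neg (X : A) (s : ℝ) (C : A) : expConj X s (-C) = -expConj X s C := by
  simp only [expConj, mul_neg, neg_mul]

@[simp] theorem expConj_smul (X : A) (s r : ℝ) (C : A) :
    expConj X s (r • C) = r • expConj X s C := by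
  simp only [expConj, mul_smul_comm, smul_mul_assoc]

theorem norm_expConj_sub_le {X : A} (hX : X ∈ skewAdjoint A) (C : A) {t : ℝ} (ht : 0 ≤ t) :
    ‖expConj X t C - C‖ ≤ ‖⁅X, C⁆‖ * t := by
  simpa using norm_le_of_norm_deriv_le_mul_pow (n := 0)
    (fun s => (hasDerivAt_expConj X C s).sub_const C) (by simp)
    (fun s _ => by rw [norm_expConj hX, pow_zero, mul_one]) ht

theorem norm_expConj_sub_sub_smul_le {X : A} (hX : X ∈ skewAdjoint A) (C : A) {t : ℝ}
    (ht : 0 ≤ t) : ‖expConj X t C - C - t • ⁅X, C⁆‖ ≤ ‖⁅X, ⁅X, C⁆⁆‖ * t ^ 2 / 2 := by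
  have hderiv (s : ℝ) : HasDerivAt (fun s => expConj X s C - C - s • ⁅X, C⁆)
      (expConj X s ⁅X, C⁆ - ⁅X, C⁆) s := by
    refine (((hasDerivAt_expConj X C s).sub_const C).sub
      ((hasDerivAt_id s).smul_const ⁅X, C⁆)).congr_deriv ?_
    rw [one_smul]
  simpa [one_add_one_eq_two] using norm_le_of_norm_deriv_le_mul_pow hderiv (by simp) (n := 1)
    (fun s hs => by simpa using norm_expConj_sub_le hX ⁅X, C⁆ hs) ht

theorem norm_expConj_sub_add_smul_expConj_le {X : A} (hX : X ∈ skewAdjoint A) (Y : A) {t : ℝ}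
    (ht : 0 ≤ t) : ‖expConj X t Y - Y + t • expConj X t ⁅Y, X⁆‖ ≤ ‖⁅X, ⁅Y, X⁆⁆‖ * t ^ 2 / 2 := by
  have hderiv (s : ℝ) : HasDerivAt (fun s => expConj X s Y - Y + s • expConj X s ⁅Y, X⁆)
      (s • expConj X s ⁅X, ⁅Y, X⁆⁆) s := by
    refine (((hasDerivAt_expConj X Y s).sub_const Y).add
      ((hasDerivAt_id s).smul (hasDerivAt_expConj X ⁅Y, X⁆ s))).congr_deriv ?_
    rw [← lie_skew X Y, expConj_neg, id, one_smul]
    abel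
  simpa [one_add_one_eq_two] using norm_le_of_norm_deriv_le_mul_pow hderiv (by simp) (n := 1)
    (fun s hs => by rw [norm_smul, norm_expConj hX, Real.norm_of_nonneg hs, mul_comm, pow_one]) ht

noncomputable def strangDefect (X Y : A) (s : ℝ) : A :=
  expConj X s Y - Y + (expConj X s (expConj Y s X) - X)

theorem strangDefect_eq (X Y : A) (s : ℝ) :
    strangDefect X Y s = (expConj X s Y - Y + s • expConj X s ⁅Y, X⁆) +
      expConj X s (expConj Y s X - X - s • ⁅Y, X⁆) := by
  simp only [strangDefect, expConj_sub, expConj_smul, expConj_self]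
  abel

theorem norm_strangDefect_le {X Y : A} (hX : X ∈ skewAdjoint A) (hY : Y ∈ skewAdjoint A) {s : ℝ}
    (hs : 0 ≤ s) : ‖strangDefect X Y s‖ ≤ (‖⁅X, ⁅Y, X⁆⁆‖ + ‖⁅Y, ⁅Y, X⁆⁆‖) * s ^ 2 / 2 := by
  rw [strangDefect_eq]
  have h₁ := norm_expConj_sub_add_smul_expConj_le hX Y hs
  have h₂ := norm_expConj_sub_sub_smul_le hY X hs
  calc _ ≤ _ := norm_add_le _ _
    _ ≤ _ := by rw [norm_expConj hX]; linarith

theorem hasDerivAt_strang (X Y : A) (s : ℝ) :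
    HasDerivAt (fun s : ℝ => exp (s • X) * exp (s • Y) * exp (s • X))
      ((X + Y + X + strangDefect X Y s) * (exp (s • X) * exp (s • Y) * exp (s • X))) s := by
  refine (((hasDerivAt_exp_smul_const' X s).mul (hasDerivAt_exp_smul_const' Y s)).mul
    (hasDerivAt_exp_smul_const' X s)).congr_deriv ?_
  have cancel (Z a : A) : exp (-Z) * (exp Z * a) = a := by
    rw [← mul_assoc, exp_neg_mul_exp, one_mul]
  simp only [strangDefect, expConj, Pi.mul_apply, add_mul, sub_mul, mul_assoc, cancel]
  abel

theorem norm_exp_mul_exp_mul_exp_sub_exp_le {X Y : A} (hX : X ∈ skewAdjoint A)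
    (hY : Y ∈ skewAdjoint A) :
    ‖exp X * exp Y * exp X - exp (X + Y + X)‖ ≤ (‖⁅X, ⁅Y, X⁆⁆‖ + ‖⁅Y, ⁅Y, X⁆⁆‖) / 6 := by
  set W := X + Y + X
  have hW : W ∈ skewAdjoint A := add_mem (add_mem hX hY) hX
  set S : ℝ → A := fun s => exp (s • X) * exp (s • Y) * exp (s • X)
  have hS (s : ℝ) : S s ∈ unitary A :=
    mul_mem (mul_mem (exp_smul_mem_unitary hX s) (exp_smul_mem_unitary hY s))
      (exp_smul_mem_unitary hX s)
  -- Duhamel: only the defect drives `e^{-sW} S(s)`.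
  have hderiv (s : ℝ) : HasDerivAt (fun s => exp (-(s • W)) * S s - 1)
      (exp (-(s • W)) * (strangDefect X Y s * S s)) s := by
    refine (((hasDerivAt_exp_neg_smul W s).mul (hasDerivAt_strang X Y s)).sub_const
      1).congr_deriv ?_
    simp only [W, S]
    noncomm_ring
  have hbound := norm_le_of_norm_deriv_le_mul_pow hderiv (by simp [S]) (n := 2)
    (c := (‖⁅X, ⁅Y, X⁆⁆‖ + ‖⁅Y, ⁅Y, X⁆⁆‖) / 2) (fun s hs => by
      rw [CStarRing.norm_mem_unitary_mul _ (exp_neg_smul_mem_unitary hW s),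
        CStarRing.norm_mul_mem_unitary _ (hS s)]
      linarith [norm_strangDefect_le hX hY hs]) zero_le_one
  have hsplit : exp X * exp Y * exp X - exp W = exp W * (exp (-((1 : ℝ) • W)) * S 1 - 1) := by
    simp only [S, one_smul]
    rw [mul_sub, ← mul_assoc, exp_mul_exp_neg, one_mul, mul_one]
  rw [hsplit, CStarRing.norm_mem_unitary_mul _ (exp_mem_unitary hW)]
  linarith

theorem norm_mul_mul_sub_le_of_mem_unitary {u : A} (hu : u ∈ unitary A) (a b c : A) :
    ‖u * a * u - c‖ ≤ ‖a - b‖ + ‖u * b * u - c‖ := by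
  calc ‖u * a * u - c‖ = ‖u * (a - b) * u + (u * b * u - c)‖ := by noncomm_ring
    _ ≤ ‖u * (a - b) * u‖ + ‖u * b * u - c‖ := norm_add_le _ _
    _ = ‖a - b‖ + ‖u * b * u - c‖ := by
      rw [CStarRing.norm_mul_mem_unitary _ hu, CStarRing.norm_mem_unitary_mul _ hu]

noncomputable def strangBound (X Y : A) : ℝ := (‖⁅X, ⁅Y, X⁆⁆‖ + ‖⁅Y, ⁅Y, X⁆⁆‖) / 6

theorem strangBound_smul (a : ℂ) (P Q : A) : strangBound (a • P) ((2 * a) • Q) =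
    ‖a‖ ^ 3 / 3 * ‖⁅P, ⁅Q, P⁆⁆‖ + 2 * ‖a‖ ^ 3 / 3 * ‖⁅Q, ⁅Q, P⁆⁆‖ := by
  simp only [strangBound, smul_lie, lie_smul, smul_smul, norm_smul, norm_mul, Complex.norm_two]
  ring

theorem norm_palindromicProd_exp_sub_exp_le {X : ℕ → A} (hX : ∀ γ, X γ ∈ skewAdjoint A) (n : ℕ) :
    ‖palindromicProd (fun γ => exp (X γ)) n - exp (2 • ∑ γ ∈ Icc 1 n, X γ)‖ ≤
      ∑ γ ∈ Icc 1 n, strangBound (X γ) (2 • ∑ k ∈ Icc (γ + 1) n, X k) := by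
  induction n generalizing X with
  | zero => simp [palindromicProd]
  | succ n ih =>
    have hsum : 2 • ∑ γ ∈ Icc 1 (n + 1), X γ = X 1 + 2 • ∑ k ∈ Icc 1 n, X (k + 1) + X 1 := by
      rw [sum_Icc_one_add_one, smul_add, two_nsmul (X 1)]
      abel
    set T := 2 • ∑ k ∈ Icc 1 n, X (k + 1)
    have hT : T ∈ skewAdjoint A := nsmul_mem (sum_mem fun k _ => hX (k + 1)) 2
    rw [palindromicProd_succ, hsum, sum_Icc_one_add_one]
    simp only [sum_Icc_add_one_add_one]
    calc _ ≤ ‖palindromicProd (fun γ => exp (X (γ + 1))) n - exp T‖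
          + ‖exp (X 1) * exp T * exp (X 1) - exp (X 1 + T + X 1)‖ :=
          norm_mul_mul_sub_le_of_mem_unitary (exp_mem_unitary (hX 1)) _ _ _
      _ ≤ ∑ γ ∈ Icc 1 n, strangBound (X (γ + 1)) (2 • ∑ k ∈ Icc (γ + 1) n, X (k + 1))
          + strangBound (X 1) T :=
        add_le_add (ih fun γ => hX (γ + 1)) (norm_exp_mul_exp_mul_exp_sub_exp_le (hX 1) hT)
      _ = _ := add_comm _ _

end CStarAlgebra

/-- **Tight error bound for the second-order Suzuki (Strang) formula with `Γ` Hermitian terms**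
(Proposition 10 of Childs et al., Prop. 2 in the paper).
The formula is `S₂(t) = e^{-itH_1/2} ⋯ e^{-itH_Γ/2} ⋅ e^{-itH_Γ/2} ⋯ e^{-itH_1/2}`. -/
theorem suzuki2_tight_error_bound
    {E : Type*} [NormedAddCommGroup E] [InnerProductSpace ℂ E] [FiniteDimensional ℂ E]
    (Γ : ℕ) (Hop : ℕ → E →L[ℂ] E) (hHop : ∀ γ, IsSelfAdjoint (Hop γ))
    (H : E →L[ℂ] E) (hH : H = ∑ γ ∈ Finset.Icc 1 Γ, Hop γ) :
    ∀ t : ℝ, 0 ≤ t →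
      ‖((List.range Γ).map fun m => exp ((-(Complex.I * t) / 2) • Hop (m + 1))).prod *
          ((List.range Γ).map fun m => exp ((-(Complex.I * t) / 2) • Hop (Γ - m))).prod -
          exp ((-(Complex.I * t)) • H)‖
        ≤ t ^ 3 / 12 *
            ∑ γ₁ ∈ Finset.Icc 1 Γ,
              ‖⁅∑ γ₃ ∈ Finset.Icc (γ₁ + 1) Γ, Hop γ₃,
                  ⁅∑ γ₂ ∈ Finset.Icc (γ₁ + 1) Γ, Hop γ₂, Hop γ₁⁆⁆‖
          + t ^ 3 / 24 *
            ∑ γ₁ ∈ Finset.Icc 1 Γ,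
              ‖⁅Hop γ₁, ⁅∑ γ₂ ∈ Finset.Icc (γ₁ + 1) Γ, Hop γ₂, Hop γ₁⁆⁆‖ := by
  intro t ht
  set c : ℂ := -(Complex.I * t) / 2 with hc
  have hc_skew : c ∈ skewAdjoint ℂ := by
    rw [skewAdjoint.mem_iff, hc, Complex.star_def, map_div₀, map_neg, map_mul, Complex.conj_I,
      Complex.conj_ofReal, map_ofNat]
    ring
  have hc_norm : ‖c‖ = t / 2 := by simp [hc, abs_of_nonneg ht]
  have htwo (B : E →L[ℂ] E) : 2 • (c • B) = (2 * c) • B := by rw [two_nsmul, ← add_smul, two_mul]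
  have hbound := CStarAlgebra.norm_palindromicProd_exp_sub_exp_le
    (fun γ => (hHop γ).smul_mem_skewAdjoint hc_skew) Γ
  simp only [← smul_sum, htwo, CStarAlgebra.strangBound_smul, sum_add_distrib, ← mul_sum] at hbound
  rw [show 2 * c = -(Complex.I * t) by rw [hc]; ring, ← hH, hc_norm] at hbound
  refine hbound.trans (le_of_eq ?_)
  ring
end

section
/- Let H_1 and H_2 be Hermitian operators, H = H_1 + H_2, and let S_2(t) = e^{-itH_1/2} e^{-itH_2} e^{-itH_1/2} be the Strang splitting. Then for all t ≥ 0, ‖S_2(t) − e^{-itH}‖ ≤ (t³/12)·‖[H_2, [H_2, H_1]]‖ + (t³/24)·‖[H_1, [H_1, H_2]]‖. -/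
/-!
Put `A = -iH₁/2` and `B = -iH₂`, so that `S(s) = e^{sA} e^{sB} e^{sA}` is to be compared with
`e^{s(2A+B)}`. Differentiating gives `S' = (2A + B) S + e^{sA} T(s) e^{-sA} S` with
`T(s) = e^{sB} A e^{-sB} - e^{-sA} B e^{sA} + B - A`. Since
`d/ds (e^{sM} Z e^{-sM}) = e^{sM} [M, Z] e^{-sM}` and conjugation by the unitaries `e^{sM}` is
isometric, `T(0) = 0` and `‖T'(s)‖ ≤ s (‖[A, [A, B]]‖ + ‖[B, [B, A]]‖)`. Variation of constants
then bounds `‖S(t) - e^{t(2A+B)}‖` by `∫₀ᵗ ‖T‖ ≤ t³/6 (‖[A, [A, B]]‖ + ‖[B, [B, A]]‖)`, and the two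
nested commutators are `1/4` and `1/2` times those of the `Hᵢ` in norm.
-/

open NormedSpace

section

-- Only locally: the brackets in the statement of the theorem below are `Ring.bracket`.
attribute [local instance] LieRing.ofAssociativeRing

theorem norm_le_of_norm_deriv_le_pow {E : Type*} [NormedAddCommGroup E] [NormedSpace ℝ E]
    {f f' : ℝ → E} (hf0 : f 0 = 0) (hf : ∀ s, HasDerivAt f (f' s) s) (n : ℕ) {c t : ℝ}
    (ht : 0 ≤ t) (bound : ∀ s ∈ Set.Ico 0 t, ‖f' s‖ ≤ c * s ^ n) :
    ‖f t‖ ≤ c * t ^ (n + 1) / (n + 1) := by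
  have hB (s : ℝ) : HasDerivAt (fun s => c * s ^ (n + 1) / (n + 1)) (c * s ^ n) s := by
    refine (((hasDerivAt_pow (n + 1) s).const_mul c).div_const ((n : ℝ) + 1)).congr_deriv ?_
    simp only [Nat.add_sub_cancel, Nat.cast_add, Nat.cast_one]
    field_simp
  exact image_norm_le_of_norm_deriv_right_le_deriv_boundary
    (fun s _ => (hf s).continuousAt.continuousWithinAt) (fun s _ => (hf s).hasDerivWithinAt)
    (by simp [hf0]) hB bound ⟨ht, le_rfl⟩

section BanachAlgebra

variable {𝔸 : Type*} [NormedRing 𝔸] [NormedAlgebra ℝ 𝔸]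

theorem norm_exp_smul_neg_le_one {M : 𝔸} (hM : ∀ u : ℝ, ‖exp (u • M)‖ ≤ 1) (s : ℝ) :
    ‖exp (s • -M)‖ ≤ 1 := by
  simpa only [smul_neg, neg_smul] using hM (-s)

noncomputable def conjExp (M : 𝔸) (s : ℝ) (Z : 𝔸) : 𝔸 := exp (s • M) * Z * exp (s • -M)

theorem conjExp_zero (M Z : 𝔸) : conjExp M 0 Z = Z := by simp [conjExp]

theorem conjExp_neg (M Z : 𝔸) (s : ℝ) : conjExp M s (-Z) = -conjExp M s Z := by
  simp [conjExp]

theorem norm_conjExp_le {M : 𝔸} (hM : ∀ u : ℝ, ‖exp (u • M)‖ ≤ 1) (s : ℝ) (Z : 𝔸) :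
    ‖conjExp M s Z‖ ≤ ‖Z‖ :=
  calc ‖conjExp M s Z‖ ≤ ‖exp (s • M)‖ * ‖Z‖ * ‖exp (s • -M)‖ := norm_mul₃_le
    _ ≤ 1 * ‖Z‖ * 1 := by gcongr; exacts [hM s, norm_exp_smul_neg_le_one hM s]
    _ = ‖Z‖ := by ring

noncomputable def strangSplitting (A B : 𝔸) (s : ℝ) : 𝔸 :=
  exp (s • A) * exp (s • B) * exp (s • A)

noncomputable def strangDefect (A B : 𝔸) (s : ℝ) : 𝔸 :=
  conjExp B s A - conjExp (-A) s B + B - A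

theorem strangDefect_zero (A B : 𝔸) : strangDefect A B 0 = 0 := by
  simp [strangDefect, conjExp_zero]

theorem norm_strangSplitting_le_one {A B : 𝔸} (hA : ∀ u : ℝ, ‖exp (u • A)‖ ≤ 1)
    (hB : ∀ u : ℝ, ‖exp (u • B)‖ ≤ 1) (s : ℝ) : ‖strangSplitting A B s‖ ≤ 1 :=
  calc ‖strangSplitting A B s‖ ≤ ‖exp (s • A)‖ * ‖exp (s • B)‖ * ‖exp (s • A)‖ := norm_mul₃_le
    _ ≤ 1 * 1 * 1 := by gcongr; exacts [hA s, hB s, hA s]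
    _ = 1 := by norm_num

variable [CompleteSpace 𝔸]

theorem exp_smul_mul_exp_smul_neg (M : 𝔸) (s : ℝ) : exp (s • M) * exp (s • -M) = 1 := by
  let : NormedAlgebra ℚ 𝔸 := .restrictScalars ℚ ℝ 𝔸
  rw [smul_neg, ← exp_add_of_commute (Commute.refl _).neg_right, add_neg_cancel, exp_zero]

theorem exp_smul_neg_mul_exp_smul (M : 𝔸) (s : ℝ) : exp (s • -M) * exp (s • M) = 1 := by
  simpa using exp_smul_mul_exp_smul_neg (-M) s

theorem hasDerivAt_conjExp (M Z : 𝔸) (s : ℝ) :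
    HasDerivAt (fun s => conjExp M s Z) (conjExp M s ⁅M, Z⁆) s := by
  refine ((hasDerivAt_exp_smul_const' M s).mul_const Z).mul (hasDerivAt_exp_smul_const' (-M) s)
    |>.congr_deriv ?_
  simp only [conjExp, Ring.lie_def, (((Commute.refl M).smul_right s).exp_right).eq]
  noncomm_ring

theorem norm_conjExp_sub_le {M : 𝔸} (hM : ∀ u : ℝ, ‖exp (u • M)‖ ≤ 1) (Z : 𝔸) {s : ℝ}
    (hs : 0 ≤ s) : ‖conjExp M s Z - Z‖ ≤ ‖⁅M, Z⁆‖ * s := by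
  simpa using norm_le_of_norm_deriv_le_pow (f := fun s => conjExp M s Z - Z)
    (by simp [conjExp_zero]) (fun s => (hasDerivAt_conjExp M Z s).sub_const Z) 0 hs
    (fun w _ => by simpa using norm_conjExp_le hM w ⁅M, Z⁆)

theorem hasDerivAt_strangSplitting (A B : 𝔸) (s : ℝ) :
    HasDerivAt (strangSplitting A B)
      ((A + A + B) * strangSplitting A B s
        + conjExp A s (strangDefect A B s) * strangSplitting A B s) s := by
  refine ((hasDerivAt_exp_smul_const' A s).mul (hasDerivAt_exp_smul_const' B s)).mul
    (hasDerivAt_exp_smul_const' A s) |>.congr_deriv ?_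
  have cancel_A (W : 𝔸) : exp (s • -A) * (exp (s • A) * W) = W := by
    rw [← mul_assoc, exp_smul_neg_mul_exp_smul, one_mul]
  have cancel_A' (W : 𝔸) : exp (s • A) * (exp (s • -A) * W) = W := by
    rw [← mul_assoc, exp_smul_mul_exp_smul_neg, one_mul]
  have cancel_B (W : 𝔸) : exp (s • -B) * (exp (s • B) * W) = W := by
    rw [← mul_assoc, exp_smul_neg_mul_exp_smul, one_mul]
  have commute_A (W : 𝔸) : exp (s • A) * (A * W) = A * (exp (s • A) * W) :=
    ((Commute.refl A).smul_right s).exp_right.symm.left_comm W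
  simp only [strangSplitting, strangDefect, conjExp, Pi.mul_apply, neg_neg, mul_add, add_mul,
    mul_sub, sub_mul, mul_assoc, cancel_A, cancel_A', cancel_B, commute_A]
  abel

theorem hasDerivAt_strangDefect (A B : 𝔸) (s : ℝ) :
    HasDerivAt (strangDefect A B) (conjExp (-A) s ⁅A, B⁆ - conjExp B s ⁅A, B⁆) s := by
  refine (((hasDerivAt_conjExp B A s).sub (hasDerivAt_conjExp (-A) B s)).add_const B).sub_const A
    |>.congr_deriv ?_
  simp only [← lie_skew B A, neg_lie, conjExp_neg]
  abel

theorem norm_strangDefect_le {A B : 𝔸} (hA : ∀ u : ℝ, ‖exp (u • A)‖ ≤ 1)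
    (hB : ∀ u : ℝ, ‖exp (u • B)‖ ≤ 1) {s : ℝ} (hs : 0 ≤ s) :
    ‖strangDefect A B s‖ ≤ (‖⁅A, ⁅A, B⁆⁆‖ + ‖⁅B, ⁅B, A⁆⁆‖) * s ^ 2 / 2 := by
  have hBBA : ‖⁅B, ⁅A, B⁆⁆‖ = ‖⁅B, ⁅B, A⁆⁆‖ := by rw [← lie_skew B A, lie_neg, norm_neg]
  have bound (w : ℝ) (hw : w ∈ Set.Ico 0 s) :
      ‖conjExp (-A) w ⁅A, B⁆ - conjExp B w ⁅A, B⁆‖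
        ≤ (‖⁅A, ⁅A, B⁆⁆‖ + ‖⁅B, ⁅B, A⁆⁆‖) * w ^ 1 := by
    have hA' := norm_conjExp_sub_le (norm_exp_smul_neg_le_one hA) ⁅A, B⁆ hw.1
    have hB' := norm_conjExp_sub_le hB ⁅A, B⁆ hw.1
    simp only [neg_lie, norm_neg] at hA'
    rw [hBBA] at hB'
    calc ‖conjExp (-A) w ⁅A, B⁆ - conjExp B w ⁅A, B⁆‖
        = ‖(conjExp (-A) w ⁅A, B⁆ - ⁅A, B⁆) - (conjExp B w ⁅A, B⁆ - ⁅A, B⁆)‖ := by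
          rw [sub_sub_sub_cancel_right]
      _ ≤ ‖⁅A, ⁅A, B⁆⁆‖ * w + ‖⁅B, ⁅B, A⁆⁆‖ * w := (norm_sub_le _ _).trans (add_le_add hA' hB')
      _ = _ := by ring
  simpa [one_add_one_eq_two] using
    norm_le_of_norm_deriv_le_pow (strangDefect_zero A B) (hasDerivAt_strangDefect A B) 1 hs bound

theorem norm_sub_exp_smul_le_of_hasDerivAt {X : 𝔸} (hX : ∀ u : ℝ, ‖exp (u • X)‖ ≤ 1)
    {S R : ℝ → 𝔸} (hS0 : S 0 = 1) (hS : ∀ s, HasDerivAt S (X * S s + R s) s) (n : ℕ)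
    {c t : ℝ} (ht : 0 ≤ t) (hR : ∀ s ∈ Set.Ico 0 t, ‖R s‖ ≤ c * s ^ n) :
    ‖S t - exp (t • X)‖ ≤ c * t ^ (n + 1) / (n + 1) := by
  have hf (s : ℝ) : HasDerivAt (fun s => exp (s • -X) * S s - 1) (exp (s • -X) * R s) s := by
    refine ((hasDerivAt_exp_smul_const' (-X) s).mul (hS s)).sub_const 1 |>.congr_deriv ?_
    rw [(((Commute.refl (-X)).smul_right s).exp_right).eq]
    noncomm_ring
  have hf' (s : ℝ) (hs : s ∈ Set.Ico 0 t) : ‖exp (s • -X) * R s‖ ≤ c * s ^ n :=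
    calc ‖exp (s • -X) * R s‖ ≤ ‖exp (s • -X)‖ * ‖R s‖ := norm_mul_le _ _
      _ ≤ 1 * (c * s ^ n) := by gcongr; exacts [norm_exp_smul_neg_le_one hX s, hR s hs]
      _ = c * s ^ n := one_mul _
  calc ‖S t - exp (t • X)‖ = ‖exp (t • X) * (exp (t • -X) * S t - 1)‖ := by
        rw [mul_sub, ← mul_assoc, exp_smul_mul_exp_smul_neg, one_mul, mul_one]
    _ ≤ ‖exp (t • X)‖ * ‖exp (t • -X) * S t - 1‖ := norm_mul_le _ _
    _ ≤ ‖exp (t • -X) * S t - 1‖ := mul_le_of_le_one_left (norm_nonneg _) (hX t)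
    _ ≤ c * t ^ (n + 1) / (n + 1) := norm_le_of_norm_deriv_le_pow (by simp [hS0]) hf n ht hf'

theorem norm_strangSplitting_sub_exp_le {A B : 𝔸} (hA : ∀ u : ℝ, ‖exp (u • A)‖ ≤ 1)
    (hB : ∀ u : ℝ, ‖exp (u • B)‖ ≤ 1) (hAB : ∀ u : ℝ, ‖exp (u • (A + A + B))‖ ≤ 1) {t : ℝ}
    (ht : 0 ≤ t) :
    ‖strangSplitting A B t - exp (t • (A + A + B))‖
      ≤ (‖⁅A, ⁅A, B⁆⁆‖ + ‖⁅B, ⁅B, A⁆⁆‖) * t ^ 3 / 6 := by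
  set K := ‖⁅A, ⁅A, B⁆⁆‖ + ‖⁅B, ⁅B, A⁆⁆‖
  have hR (s : ℝ) (hs : s ∈ Set.Ico 0 t) :
      ‖conjExp A s (strangDefect A B s) * strangSplitting A B s‖ ≤ K / 2 * s ^ 2 :=
    calc ‖conjExp A s (strangDefect A B s) * strangSplitting A B s‖
        ≤ ‖conjExp A s (strangDefect A B s)‖ * ‖strangSplitting A B s‖ := norm_mul_le _ _
      _ ≤ ‖strangDefect A B s‖ * 1 := by
        gcongr
        exacts [norm_conjExp_le hA s _, norm_strangSplitting_le_one hA hB s]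
      _ ≤ K * s ^ 2 / 2 := by rw [mul_one]; exact norm_strangDefect_le hA hB hs.1
      _ = K / 2 * s ^ 2 := by ring
  convert norm_sub_exp_smul_le_of_hasDerivAt hAB (by simp [strangSplitting])
    (hasDerivAt_strangSplitting A B) 2 ht hR using 1
  push_cast
  ring

end BanachAlgebra

theorem norm_exp_real_smul_le_one_of_mem_skewAdjoint {𝔹 : Type*} [NormedRing 𝔹] [StarRing 𝔹]
    [CStarRing 𝔹] [NormedAlgebra ℂ 𝔹] [StarModule ℂ 𝔹] [CompleteSpace 𝔹] {K : 𝔹}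
    (hK : K ∈ skewAdjoint 𝔹) (u : ℝ) : ‖exp (u • K)‖ ≤ 1 := by
  let : NormedAlgebra ℚ 𝔹 := .restrictScalars ℚ ℂ 𝔹
  have hu : exp (u • K) ∈ unitary 𝔹 :=
    exp_mem_unitary_of_mem_skewAdjoint (skewAdjoint.smul_mem u hK)
  rcases subsingleton_or_nontrivial 𝔹 with _ | _
  · simp [Subsingleton.elim (exp (u • K)) 0]
  · exact (CStarRing.norm_of_mem_unitary hu).le

theorem norm_lie_smul_lie_smul {𝕜 𝔹 : Type*} [NormedField 𝕜] [NormedRing 𝔹] [NormedAlgebra 𝕜 𝔹]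
    (z w : 𝕜) (X Y : 𝔹) : ‖⁅z • X, ⁅z • X, w • Y⁆⁆‖ = ‖z‖ ^ 2 * ‖w‖ * ‖⁅X, ⁅X, Y⁆⁆‖ := by
  simp only [smul_lie, lie_smul, norm_smul]
  ring

end

/-- **Tight Trotter error bound for the Strang splitting with two Hermitian terms.**
For Hermitian operators `H₁, H₂` on a finite-dimensional complex Hilbert space,
`H = H₁ + H₂` and the Strang splitting `S₂(t) = e^{-itH₁/2} e^{-itH₂} e^{-itH₁/2}`,
one has `‖S₂(t) − e^{-itH}‖ ≤ (t³/12)‖[H₂,[H₂,H₁]]‖ + (t³/24)‖[H₁,[H₁,H₂]]‖` for all `t ≥ 0`. -/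
theorem strang_error_bound_two_terms
    {E : Type*} [NormedAddCommGroup E] [InnerProductSpace ℂ E] [FiniteDimensional ℂ E]
    (H₁ H₂ : E →L[ℂ] E) (hH₁ : IsSelfAdjoint H₁) (hH₂ : IsSelfAdjoint H₂)
    (H : E →L[ℂ] E) (hH : H = H₁ + H₂) :
    ∀ t : ℝ, 0 ≤ t →
      ‖exp ((-(Complex.I * t) / 2) • H₁) * exp ((-(Complex.I * t)) • H₂) *
          exp ((-(Complex.I * t) / 2) • H₁) - exp ((-(Complex.I * t)) • H)‖
        ≤ t ^ 3 / 12 * ‖⁅H₂, ⁅H₂, H₁⁆⁆‖ + t ^ 3 / 24 * ‖⁅H₁, ⁅H₁, H₂⁆⁆‖ := by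
  intro t ht
  set A := (-Complex.I / 2) • H₁
  set B := (-Complex.I) • H₂
  have hA : A ∈ skewAdjoint (E →L[ℂ] E) :=
    hH₁.smul_mem_skewAdjoint (by simp [skewAdjoint.mem_iff, neg_div])
  have hB : B ∈ skewAdjoint (E →L[ℂ] E) := hH₂.smul_mem_skewAdjoint (by simp [skewAdjoint.mem_iff])
  have hA_t : (-(Complex.I * t) / 2) • H₁ = t • A := by rw [← Complex.coe_smul, smul_smul]; ring_nf
  have hB_t : (-(Complex.I * t)) • H₂ = t • B := by rw [← Complex.coe_smul, smul_smul]; ring_nf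
  have hH_t : (-(Complex.I * t)) • H = t • (A + A + B) := by rw [← Complex.coe_smul, hH]; module
  have hAAB : ‖⁅A, ⁅A, B⁆⁆‖ = ‖-Complex.I / 2‖ ^ 2 * ‖-Complex.I‖ * ‖⁅H₁, ⁅H₁, H₂⁆⁆‖ :=
    norm_lie_smul_lie_smul _ _ H₁ H₂
  have hBBA : ‖⁅B, ⁅B, A⁆⁆‖ = ‖-Complex.I‖ ^ 2 * ‖-Complex.I / 2‖ * ‖⁅H₂, ⁅H₂, H₁⁆⁆‖ :=
    norm_lie_smul_lie_smul _ _ H₂ H₁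
  rw [hA_t, hB_t, hH_t]
  calc _ ≤ (‖⁅A, ⁅A, B⁆⁆‖ + ‖⁅B, ⁅B, A⁆⁆‖) * t ^ 3 / 6 :=
        norm_strangSplitting_sub_exp_le (norm_exp_real_smul_le_one_of_mem_skewAdjoint hA)
          (norm_exp_real_smul_le_one_of_mem_skewAdjoint hB)
          (norm_exp_real_smul_le_one_of_mem_skewAdjoint (add_mem (add_mem hA hA) hB)) ht
    _ = _ := by
      rw [hAAB, hBBA, norm_div, norm_neg, Complex.norm_I, Complex.norm_ofNat]
      ring
end

section
/- Let H_1, H_2, H_3 be Hermitian operators, H = H_1 + H_2 + H_3, and let S_2(t) = e^{-itH_1/2} e^{-itH_2/2} e^{-itH_3} e^{-itH_2/2} e^{-itH_1/2} be the second-order Suzuki (Strang) formula. Then for all t ≥ 0, ‖S_2(t) − e^{-itH}‖ ≤ t³·( (1/24)‖[H_1,[H_2,H_1]]‖ + (1/12)‖[H_2,[H_2,H_1]]‖ + (1/12)‖[H_3,[H_2,H_1]]‖ + (1/24)‖[H_1,[H_3,H_1]]‖ + (1/12)‖[H_2,[H_3,H_1]]‖ + (1/12)‖[H_3,[H_3,H_1]]‖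 + (1/24)‖[H_2,[H_3,H_2]]‖ + (1/12)‖[H_3,[H_3,H_2]]‖ ). -/
/-!
Write the formula as `S(t) = e^{ta} e^{tb} e^{tc} e^{tb} e^{ta}` with skew-adjoint
`a = -iH₁/2`, `b = -iH₂/2`, `c = -iH₃`, so that `e^{-itH} = e^{th}` with `h = 2a + 2b + c`.
Then `S' = G S`, where `G(u)` is the sum of the five generators, each conjugated by the
factors to its left, and `e^{-th} S(t) - 1` has derivative `e^{-th} (G - h) S`, of norm
`‖G - h‖` since all exponentials are unitary. The difference `G(τ) - h` splits into three
pieces vanishing at an inner time `y = 0`; the `y`-derivative of each is a difference of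
conjugates of one commutator `Z`, which the first-order bound
`‖Z - e^{sx} Z e^{-sx}‖ ≤ s ‖⁅x, Z⁆‖` controls linearly in `y` and `τ - y`. Integrating
once gives `‖G(τ) - h‖ ≤ τ² K`, and once more `‖S(t) - e^{th}‖ ≤ t³ K / 3`.
-/

open NormedSpace Set

section Calculus

variable {F : Type*} [NormedAddCommGroup F] [NormedSpace ℝ F]

lemma norm_le_of_norm_deriv_le_deriv {f f' : ℝ → F} {B B' : ℝ → ℝ} {τ : ℝ} (hτ : 0 ≤ τ)
    (hf : ∀ y, HasDerivAt f (f' y) y) (hB : ∀ y, HasDerivAt B (B' y) y) (h0 : ‖f 0‖ ≤ B 0)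
    (bound : ∀ y ∈ Ico 0 τ, ‖f' y‖ ≤ B' y) : ‖f τ‖ ≤ B τ :=
  image_norm_le_of_norm_deriv_right_le_deriv_boundary
    (fun y _ => (hf y).continuousAt.continuousWithinAt) (fun y _ => (hf y).hasDerivWithinAt)
    h0 hB bound ⟨hτ, le_rfl⟩

lemma norm_le_of_norm_deriv_le_affine {f f' : ℝ → F} {τ α β γ : ℝ} (hτ : 0 ≤ τ)
    (hf : ∀ y, HasDerivAt f (f' y) y) (h0 : f 0 = 0)
    (bound : ∀ y ∈ Ico 0 τ, ‖f' y‖ ≤ (τ - y) * α + τ * β + y * γ) :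
    ‖f τ‖ ≤ τ ^ 2 * (α / 2 + β + γ / 2) := by
  have hB (y : ℝ) : HasDerivAt (fun y => (τ * y - y ^ 2 / 2) * α + τ * y * β + y ^ 2 / 2 * γ)
      ((τ - y) * α + τ * β + y * γ) y := by
    have hsq := (hasDerivAt_pow 2 y).div_const 2
    have hlin := (hasDerivAt_id y).const_mul τ
    refine ((((hlin.sub hsq).mul_const α).add (hlin.mul_const β)).add
      (hsq.mul_const γ)).congr_deriv ?_
    norm_num
  convert norm_le_of_norm_deriv_le_deriv hτ hf hB (by simp [h0]) bound using 1
  ring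

end Calculus

theorem Ring.lie_skew {R : Type*} [NonUnitalNonAssocRing R] (x y : R) : -⁅y, x⁆ = ⁅x, y⁆ := by
  rw [Ring.lie_def, Ring.lie_def, neg_sub]

theorem Ring.lie_smul_lie_smul {R B : Type*} [CommRing R] [Ring B] [Algebra R B] (r s q : R)
    (x y z : B) : ⁅r • x, ⁅s • y, q • z⁆⁆ = (r * s * q) • ⁅x, ⁅y, z⁆⁆ := by
  simp only [Ring.lie_def, smul_mul_assoc, mul_smul_comm, mul_sub, sub_mul, smul_smul]
  module

section ExpConj

variable {A : Type*} [CStarAlgebra A]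

lemma exp_real_smul_mem_unitary {x : A} (hx : x ∈ skewAdjoint A) (y : ℝ) :
    exp (y • x) ∈ unitary A :=
  let +nondep : NormedAlgebra ℚ A := .restrictScalars ℚ ℂ A
  exp_mem_unitary_of_mem_skewAdjoint (skewAdjoint.smul_mem y hx)

lemma exp_add_smul (x : A) (s y : ℝ) : exp ((s + y) • x) = exp (s • x) * exp (y • x) :=
  let +nondep : NormedAlgebra ℚ A := .restrictScalars ℚ ℂ A
  add_smul s y x ▸ exp_add_of_commute (((Commute.refl x).smul_left s).smul_right y)

lemma exp_smul_mul_exp_smul_neg_s4 (x : A) (y : ℝ) : exp (y • x) * exp (y • -x) = 1 := by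
  rw [smul_neg, ← neg_smul, ← exp_add_smul, add_neg_cancel, zero_smul, exp_zero]

lemma exp_smul_neg_mul_exp_smul_s4 (x : A) (y : ℝ) : exp (y • -x) * exp (y • x) = 1 := by
  simpa using exp_smul_mul_exp_smul_neg_s4 (-x) y

lemma exp_smul_neg_mul_cancel_left (x : A) (y : ℝ) (z : A) :
    exp (y • -x) * (exp (y • x) * z) = z := by
  rw [← mul_assoc, exp_smul_neg_mul_exp_smul_s4, one_mul]

noncomputable def expConj (x : A) (y : ℝ) (z : A) : A :=
  exp (y • x) * z * exp (y • -x)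

@[simp]
lemma expConj_zero (x : A) (y : ℝ) : expConj x y 0 = 0 := by
  simp [expConj]

@[simp]
lemma expConj_zero_time (x z : A) : expConj x 0 z = z := by
  simp [expConj]

lemma expConj_self (x : A) (y : ℝ) : expConj x y x = x := by
  rw [expConj, ((Commute.refl x).smul_left y).exp_left.eq, mul_assoc,
    exp_smul_mul_exp_smul_neg_s4, mul_one]

lemma expConj_sub (x : A) (y : ℝ) (z w : A) :
    expConj x y (z - w) = expConj x y z - expConj x y w := by
  simp only [expConj, mul_sub, sub_mul]

lemma expConj_neg (x : A) (y : ℝ) (z : A) : expConj x y (-z) = -expConj x y z := by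
  simp only [expConj, mul_neg, neg_mul]

lemma expConj_add_time (x : A) (s y : ℝ) (z : A) :
    expConj x (s + y) z = expConj x s (expConj x y z) := by
  have h : exp ((s + y) • -x) = exp (y • -x) * exp (s • -x) := by rw [add_comm, exp_add_smul]
  simp only [expConj, exp_add_smul x s y, h, mul_assoc]

lemma hasDerivAt_expConj (x z : A) (y : ℝ) :
    HasDerivAt (fun y => expConj x y z) (expConj x y ⁅x, z⁆) y := by
  have h := ((hasDerivAt_exp_smul_const' (𝕂 := ℝ) x y).mul_const z).mul
    (hasDerivAt_exp_smul_const' (𝕂 := ℝ) (-x) y)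
  refine h.congr_deriv ?_
  rw [expConj, Ring.lie_def, ((Commute.refl x).smul_right y).exp_right.eq]
  noncomm_ring

lemma HasDerivAt.expConj {g : ℝ → A} {g' : A} {y : ℝ} (h : HasDerivAt g g' y) (x : A) (s : ℝ) :
    HasDerivAt (fun y => _root_.expConj x s (g y)) (_root_.expConj x s g') y :=
  (h.const_mul _).mul_const _

variable {x : A}

lemma norm_expConj (hx : x ∈ skewAdjoint A) (y : ℝ) (z : A) : ‖expConj x y z‖ = ‖z‖ := by
  have hstar : exp (y • -x) = star (exp (y • x)) := by
    rw [star_exp, star_smul, star_trivial, ← skewAdjoint.mem_iff.mp hx]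
  have hU := exp_real_smul_mem_unitary hx y
  rw [expConj, hstar, CStarRing.norm_mul_mem_unitary _ (Unitary.star_mem hU),
    CStarRing.norm_mem_unitary_mul _ hU]

lemma norm_sub_expConj_le (hx : x ∈ skewAdjoint A) {y : ℝ} (hy : 0 ≤ y) (z : A) :
    ‖z - expConj x y z‖ ≤ y * ‖⁅x, z⁆‖ := by
  refine norm_le_of_norm_deriv_le_deriv hy (fun s => ((hasDerivAt_expConj x z s).const_sub z))
    (fun s => (hasDerivAt_id s).mul_const _) (by simp) fun s _ => ?_
  simp [norm_neg, norm_expConj hx]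

lemma norm_sub_expConj_le_add (hx : x ∈ skewAdjoint A) {y : ℝ} (hy : 0 ≤ y) (z w : A) :
    ‖z - expConj x y w‖ ≤ y * ‖⁅x, z⁆‖ + ‖z - w‖ := by
  calc ‖z - expConj x y w‖ = ‖(z - expConj x y z) + expConj x y (z - w)‖ := by
        rw [expConj_sub]; abel_nf
    _ ≤ y * ‖⁅x, z⁆‖ + ‖z - w‖ := by
        grw [norm_add_le, norm_sub_expConj_le hx hy, norm_expConj hx]

end ExpConj

section Strang

variable {A : Type*} [CStarAlgebra A] {a b c : A}

noncomputable def strangProduct (a b c : A) (u : ℝ) : A :=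
  exp (u • a) * exp (u • b) * exp (u • c) * exp (u • b) * exp (u • a)

noncomputable def strangGenerator (a b c : A) (u : ℝ) : A :=
  a + expConj a u b + expConj a u (expConj b u c) + expConj a u (expConj b u (expConj c u b))
    + expConj a u (expConj b u (expConj c u (expConj b u a)))

lemma strangProduct_mem_unitary (ha : a ∈ skewAdjoint A) (hb : b ∈ skewAdjoint A)
    (hc : c ∈ skewAdjoint A) (u : ℝ) : strangProduct a b c u ∈ unitary A := by
  have := exp_real_smul_mem_unitary ha u
  have := exp_real_smul_mem_unitary hb u
  have := exp_real_smul_mem_unitary hc u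
  unfold strangProduct
  apply_rules [mul_mem]

lemma hasDerivAt_strangProduct (a b c : A) (u : ℝ) :
    HasDerivAt (strangProduct a b c) (strangGenerator a b c u * strangProduct a b c u) u := by
  have hexp (x : A) := hasDerivAt_exp_smul_const' (𝕂 := ℝ) x u
  refine ((((hexp a).mul (hexp b)).mul (hexp c)).mul (hexp b)).mul (hexp a) |>.congr_deriv ?_
  simp only [strangGenerator, strangProduct, expConj, Pi.mul_apply, add_mul, mul_assoc,
    exp_smul_neg_mul_cancel_left]

noncomputable def strangErrorCoeff (a b c : A) : ℝ :=
  ‖⁅a, ⁅b, a⁆⁆‖ + 2 * ‖⁅b, ⁅b, a⁆⁆‖ + ‖⁅c, ⁅b, a⁆⁆‖ + ‖⁅a, ⁅c, a⁆⁆‖ / 2 + ‖⁅b, ⁅c, a⁆⁆‖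
    + ‖⁅c, ⁅c, a⁆⁆‖ / 2 + ‖⁅b, ⁅c, b⁆⁆‖ / 2 + ‖⁅c, ⁅c, b⁆⁆‖ / 2

/-- The three pieces of `strangGenerator a b c τ - (2a + 2b + c)`, evaluated at `y = τ`.
Each vanishes at `y = 0`, and its `y`-derivative involves only `⁅c, a⁆`, `⁅c, b⁆` and `⁅b, a⁆`
respectively. -/
noncomputable def strangDefectCA (a b c : A) (τ y : ℝ) : A :=
  (expConj a y c - c) + expConj a τ (expConj b τ (expConj c y a - a))

noncomputable def strangDefectCB (a b c : A) (τ y : ℝ) : A :=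
  expConj a τ (expConj b y c - c) + expConj a τ (expConj b τ (expConj c y b - b))

noncomputable def strangDefectBA (a b c : A) (τ y : ℝ) : A :=
  (2 : ℝ) • (expConj a y b - b) + expConj a τ (expConj b y a - a)
    + expConj a τ (expConj b τ (expConj c τ (expConj b y a - a)))

lemma strangGenerator_sub_eq (a b c : A) (τ : ℝ) :
    strangGenerator a b c τ - ((2 : ℝ) • a + (2 : ℝ) • b + c)
      = strangDefectCA a b c τ τ + strangDefectCB a b c τ τ + strangDefectBA a b c τ τ := by
  simp only [strangGenerator, strangDefectCA, strangDefectCB, strangDefectBA, expConj_sub,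
    expConj_self]
  module

variable {τ : ℝ}

lemma norm_strangDefectCA_le (ha : a ∈ skewAdjoint A) (hb : b ∈ skewAdjoint A)
    (hc : c ∈ skewAdjoint A) (hτ : 0 ≤ τ) :
    ‖strangDefectCA a b c τ τ‖
      ≤ τ ^ 2 * (‖⁅a, ⁅c, a⁆⁆‖ / 2 + ‖⁅b, ⁅c, a⁆⁆‖ + ‖⁅c, ⁅c, a⁆⁆‖ / 2) := by
  set Z := ⁅c, a⁆
  refine norm_le_of_norm_deriv_le_affine hτ
    (f' := fun y => expConj a y ⁅a, c⁆ + expConj a τ (expConj b τ (expConj c y Z)))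
    (fun y => ?_) (by simp [strangDefectCA]) fun y hy => ?_
  · exact ((hasDerivAt_expConj a c y).sub_const c).add
      ((((hasDerivAt_expConj c a y).sub_const a).expConj b τ).expConj a τ)
  have hZ : expConj a y ⁅a, c⁆ + expConj a τ (expConj b τ (expConj c y Z))
      = expConj a y (expConj a (τ - y) (expConj b τ (expConj c y Z)) - Z) := by
    rw [expConj_sub, ← expConj_add_time, add_sub_cancel, ← Ring.lie_skew, expConj_neg]
    abel
  rw [hZ, norm_expConj ha, norm_sub_rev]
  have h1 := norm_sub_expConj_le_add ha (sub_nonneg.2 hy.2.le) Z (expConj b τ (expConj c y Z))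
  have h2 := norm_sub_expConj_le_add hb hτ Z (expConj c y Z)
  have h3 := norm_sub_expConj_le hc hy.1 Z
  linarith

lemma norm_strangDefectCB_le (ha : a ∈ skewAdjoint A) (hb : b ∈ skewAdjoint A)
    (hc : c ∈ skewAdjoint A) (hτ : 0 ≤ τ) :
    ‖strangDefectCB a b c τ τ‖ ≤ τ ^ 2 * (‖⁅b, ⁅c, b⁆⁆‖ / 2 + ‖⁅c, ⁅c, b⁆⁆‖ / 2) := by
  set Z := ⁅c, b⁆
  refine (norm_le_of_norm_deriv_le_affine hτ (α := ‖⁅b, Z⁆‖) (β := 0) (γ := ‖⁅c, Z⁆‖)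
    (f' := fun y => expConj a τ (expConj b y ⁅b, c⁆) + expConj a τ (expConj b τ (expConj c y Z)))
    (fun y => ?_) (by simp [strangDefectCB]) fun y hy => ?_).trans_eq (by ring)
  · exact (((hasDerivAt_expConj b c y).sub_const c).expConj a τ).add
      ((((hasDerivAt_expConj c b y).sub_const b).expConj b τ).expConj a τ)
  have hZ : expConj a τ (expConj b y ⁅b, c⁆) + expConj a τ (expConj b τ (expConj c y Z))
      = expConj a τ (expConj b y (expConj b (τ - y) (expConj c y Z) - Z)) := by
    rw [expConj_sub, ← expConj_add_time, add_sub_cancel, ← Ring.lie_skew, expConj_neg, expConj_sub,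
      expConj_neg]
    abel
  rw [hZ, norm_expConj ha, norm_expConj hb, norm_sub_rev]
  have h1 := norm_sub_expConj_le_add hb (sub_nonneg.2 hy.2.le) Z (expConj c y Z)
  have h2 := norm_sub_expConj_le hc hy.1 Z
  linarith

lemma norm_strangDefectBA_le (ha : a ∈ skewAdjoint A) (hb : b ∈ skewAdjoint A)
    (hc : c ∈ skewAdjoint A) (hτ : 0 ≤ τ) :
    ‖strangDefectBA a b c τ τ‖
      ≤ τ ^ 2 * (‖⁅a, ⁅b, a⁆⁆‖ + 2 * ‖⁅b, ⁅b, a⁆⁆‖ + ‖⁅c, ⁅b, a⁆⁆‖) := by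
  set Z := ⁅b, a⁆
  refine (norm_le_of_norm_deriv_le_affine hτ
    (α := 2 * ‖⁅a, Z⁆‖) (β := ‖⁅b, Z⁆‖ + ‖⁅c, Z⁆‖) (γ := 2 * ‖⁅b, Z⁆‖)
    (f' := fun y => (2 : ℝ) • expConj a y ⁅a, b⁆ + expConj a τ (expConj b y Z)
      + expConj a τ (expConj b τ (expConj c τ (expConj b y Z))))
    (fun y => ?_) (by simp [strangDefectBA]) fun y hy => ?_).trans_eq (by ring)
  · exact ((((hasDerivAt_expConj a b y).sub_const b).const_smul (2 : ℝ)).add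
      (((hasDerivAt_expConj b a y).sub_const a).expConj a τ)).add
      (((((hasDerivAt_expConj b a y).sub_const a).expConj c τ).expConj b τ).expConj a τ)
  have hZ : (2 : ℝ) • expConj a y ⁅a, b⁆ + expConj a τ (expConj b y Z)
        + expConj a τ (expConj b τ (expConj c τ (expConj b y Z)))
      = expConj a y (expConj a (τ - y) (expConj b y Z) - Z)
        + expConj a y (expConj a (τ - y) (expConj b τ (expConj c τ (expConj b y Z))) - Z) := by
    rw [expConj_sub, expConj_sub, ← expConj_add_time, ← expConj_add_time, add_sub_cancel,
      ← Ring.lie_skew, expConj_neg]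
    module
  rw [hZ]
  grw [norm_add_le, norm_expConj ha, norm_expConj ha]
  rw [norm_sub_rev _ Z, norm_sub_rev _ Z]
  have h1 := norm_sub_expConj_le_add ha (sub_nonneg.2 hy.2.le) Z (expConj b y Z)
  have h2 := norm_sub_expConj_le hb hy.1 Z
  have h3 := norm_sub_expConj_le_add ha (sub_nonneg.2 hy.2.le) Z
    (expConj b τ (expConj c τ (expConj b y Z)))
  have h4 := norm_sub_expConj_le_add hb hτ Z (expConj c τ (expConj b y Z))
  have h5 := norm_sub_expConj_le_add hc hτ Z (expConj b y Z)
  linarith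

lemma norm_strangGenerator_sub_le (ha : a ∈ skewAdjoint A) (hb : b ∈ skewAdjoint A)
    (hc : c ∈ skewAdjoint A) (hτ : 0 ≤ τ) :
    ‖strangGenerator a b c τ - ((2 : ℝ) • a + (2 : ℝ) • b + c)‖
      ≤ τ ^ 2 * strangErrorCoeff a b c := by
  rw [strangGenerator_sub_eq]
  grw [norm_add_le, norm_add_le, norm_strangDefectCA_le ha hb hc hτ,
    norm_strangDefectCB_le ha hb hc hτ, norm_strangDefectBA_le ha hb hc hτ]
  exact le_of_eq (by rw [strangErrorCoeff]; ring)

variable {t : ℝ}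

theorem norm_strangProduct_sub_exp_le (ha : a ∈ skewAdjoint A) (hb : b ∈ skewAdjoint A)
    (hc : c ∈ skewAdjoint A) (ht : 0 ≤ t) :
    ‖strangProduct a b c t - exp (t • ((2 : ℝ) • a + (2 : ℝ) • b + c))‖
      ≤ t ^ 3 / 3 * strangErrorCoeff a b c := by
  set h := (2 : ℝ) • a + (2 : ℝ) • b + c
  have hh : h ∈ skewAdjoint A :=
    add_mem (add_mem (skewAdjoint.smul_mem 2 ha) (skewAdjoint.smul_mem 2 hb)) hc
  have hf (u : ℝ) : HasDerivAt (fun u => exp (u • -h) * strangProduct a b c u - 1)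
      (exp (u • -h) * ((strangGenerator a b c u - h) * strangProduct a b c u)) u := by
    refine (((hasDerivAt_exp_smul_const' (𝕂 := ℝ) (-h) u).mul
      (hasDerivAt_strangProduct a b c u)).sub_const 1).congr_deriv ?_
    rw [neg_mul, ((Commute.refl h).neg_right.smul_right u).exp_right.eq]
    noncomm_ring
  have hB (u : ℝ) : HasDerivAt (fun u => u ^ 3 / 3 * strangErrorCoeff a b c)
      (u ^ 2 * strangErrorCoeff a b c) u := by
    refine (((hasDerivAt_pow 3 u).div_const 3).mul_const _).congr_deriv ?_
    ring
  have key := norm_le_of_norm_deriv_le_deriv ht hf hB (by simp [strangProduct]) fun u hu => ?_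
  · calc ‖strangProduct a b c t - exp (t • h)‖
          = ‖exp (t • h) * (exp (t • -h) * strangProduct a b c t - 1)‖ := by
            rw [mul_sub, ← mul_assoc, exp_smul_mul_exp_smul_neg_s4, one_mul, mul_one]
      _ = ‖exp (t • -h) * strangProduct a b c t - 1‖ :=
            CStarRing.norm_mem_unitary_mul _ (exp_real_smul_mem_unitary hh t)
      _ ≤ _ := key
  rw [CStarRing.norm_mem_unitary_mul _ (exp_real_smul_mem_unitary (neg_mem hh) u),
    CStarRing.norm_mul_mem_unitary _ (strangProduct_mem_unitary ha hb hc u)]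
  exact norm_strangGenerator_sub_le ha hb hc hu.1

end Strang

/-- **Trotter error bound (from Theorem 1 with `s = 3`) for the second-order Suzuki formula
with three Hermitian terms.** -/
theorem strang_error_bound_three_terms_tight
    {E : Type*} [NormedAddCommGroup E] [InnerProductSpace ℂ E] [FiniteDimensional ℂ E]
    (H₁ H₂ H₃ : E →L[ℂ] E)
    (hH₁ : IsSelfAdjoint H₁) (hH₂ : IsSelfAdjoint H₂) (hH₃ : IsSelfAdjoint H₃)
    (H : E →L[ℂ] E) (hH : H = H₁ + H₂ + H₃) :
    ∀ t : ℝ, 0 ≤ t →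
      ‖exp ((-(Complex.I * t) / 2) • H₁) * exp ((-(Complex.I * t) / 2) • H₂) *
          exp ((-(Complex.I * t)) • H₃) * exp ((-(Complex.I * t) / 2) • H₂) *
          exp ((-(Complex.I * t) / 2) • H₁) - exp ((-(Complex.I * t)) • H)‖
        ≤ t ^ 3 * (1 / 24 * ‖⁅H₁, ⁅H₂, H₁⁆⁆‖ + 1 / 12 * ‖⁅H₂, ⁅H₂, H₁⁆⁆‖
            + 1 / 12 * ‖⁅H₃, ⁅H₂, H₁⁆⁆‖ + 1 / 24 * ‖⁅H₁, ⁅H₃, H₁⁆⁆‖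
            + 1 / 12 * ‖⁅H₂, ⁅H₃, H₁⁆⁆‖ + 1 / 12 * ‖⁅H₃, ⁅H₃, H₁⁆⁆‖
            + 1 / 24 * ‖⁅H₂, ⁅H₃, H₂⁆⁆‖ + 1 / 12 * ‖⁅H₃, ⁅H₃, H₂⁆⁆‖) := by
  intro t ht
  have neg_half_I_mem : -(Complex.I / 2) ∈ skewAdjoint ℂ := by
    simp [skewAdjoint.mem_iff, Complex.conj_I, neg_div]
  have neg_I_mem : -Complex.I ∈ skewAdjoint ℂ := by
    simp [skewAdjoint.mem_iff, Complex.conj_I]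
  have exp_half_step (K : E →L[ℂ] E) :
      exp ((-(Complex.I * t) / 2) • K) = exp (t • (-(Complex.I / 2)) • K) := by
    rw [← Complex.coe_smul, smul_smul]; ring_nf
  have exp_full_step (K : E →L[ℂ] E) :
      exp ((-(Complex.I * t)) • K) = exp (t • (-Complex.I) • K) := by
    rw [← Complex.coe_smul, smul_smul]; ring_nf
  have hH' : (-Complex.I) • H = (2 : ℝ) • (-(Complex.I / 2)) • H₁
      + (2 : ℝ) • (-(Complex.I / 2)) • H₂ + (-Complex.I) • H₃ := by
    rw [hH, ← Complex.coe_smul, ← Complex.coe_smul, smul_smul, smul_smul]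
    module
  rw [exp_half_step, exp_half_step, exp_full_step, exp_full_step, hH']
  refine (norm_strangProduct_sub_exp_le (hH₁.smul_mem_skewAdjoint neg_half_I_mem)
    (hH₂.smul_mem_skewAdjoint neg_half_I_mem) (hH₃.smul_mem_skewAdjoint neg_I_mem) ht).trans_eq ?_
  simp only [strangErrorCoeff, Ring.lie_smul_lie_smul, norm_smul, norm_mul, norm_neg, norm_div,
    Complex.norm_I]
  norm_num
  ring
end

section
/- Let A_1, ..., A_K be Hermitian operators with H = Σ_{k=1}^K A_k and S(t) = e^{-itA_K} ··· e^{-itA_1}. Then for all t ∈ ℝ, (d/dt) S(t) − (−iH) S(t) = Σ_{j=2}^{K} ( e^{-itA_K} ··· e^{-itA_{j+1}} ) · [ e^{-itA_j}, −i Σ_{ℓ=1}^{j-1} A_ℓ ] · ( e^{-itA_{j-1}} ··· e^{-itA_1} ), where in each product the factor with the largest index stands furthest to the left. -/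
/-!
Write `U_k(t) = e^{-itA_k}`, so that `U_k' = (-iA_k) U_k`, and `S_K = U_K S_{K-1}`. Inductively
`S_K' = (-iH_K) S_K + R_K` with `R_K` the commutator sum: the product rule gives
`S_K' = (-iA_K) U_K S_{K-1} + U_K ((-iH_{K-1}) S_{K-1} + R_{K-1})`, and moving `-iH_{K-1}`
past `U_K` produces exactly the commutator `[U_K, -iH_{K-1}] S_{K-1}`, the new term of `R_K`.
-/

open NormedSpace Finset

section DescProd

variable {M : Type*} [Monoid M]

/-- `descProd f hi n = f hi * f (hi - 1) * ⋯ * f (hi - n + 1)`. -/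
def descProd (f : ℕ → M) (hi n : ℕ) : M :=
  ((List.range n).map fun m => f (hi - m)).prod

@[simp]
lemma descProd_zero (f : ℕ → M) (hi : ℕ) : descProd f hi 0 = 1 := rfl

lemma descProd_succ (f : ℕ → M) (hi n : ℕ) :
    descProd f (hi + 1) (n + 1) = f (hi + 1) * descProd f hi n := by
  simp only [descProd, List.range_succ_eq_map, List.map_cons, List.prod_cons, List.map_map,
    Function.comp_def, Nat.sub_zero, Nat.succ_sub_succ]

end DescProd

section CommutatorSum

variable {R : Type*} [Ring R]

/-- The correction `∑_{j=2}^{K} (u_K ⋯ u_{j+1}) [u_j, b_1 + ⋯ + b_{j-1}] (u_{j-1} ⋯ u_1)`. -/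
def commutatorSum (u b : ℕ → R) (K : ℕ) : R :=
  ∑ j ∈ Icc 2 K,
    descProd u K (K - j) * ⁅u j, ∑ ℓ ∈ Icc 1 (j - 1), b ℓ⁆ * descProd u (j - 1) (j - 1)

lemma commutatorSum_succ (u b : ℕ → R) (K : ℕ) :
    commutatorSum u b (K + 1) =
      u (K + 1) * commutatorSum u b K + ⁅u (K + 1), ∑ ℓ ∈ Icc 1 K, b ℓ⁆ * descProd u K K := by
  rcases Nat.eq_zero_or_pos K with rfl | hK
  · simp [commutatorSum, Ring.lie_def]
  rw [commutatorSum, Finset.sum_Icc_succ_top (by omega), commutatorSum, Finset.mul_sum]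
  simp only [Nat.add_sub_cancel, Nat.sub_self, descProd_zero, one_mul]
  congr 1
  refine Finset.sum_congr rfl fun j hj => ?_
  rw [show K + 1 - j = K - j + 1 by grind, descProd_succ, mul_assoc, mul_assoc, mul_assoc]

end CommutatorSum

section Derivative

variable {𝕜 : Type*} [NontriviallyNormedField 𝕜] {𝔸 : Type*} [NormedRing 𝔸] [NormedAlgebra 𝕜 𝔸]

theorem hasDerivAt_descProd {U : ℕ → 𝕜 → 𝔸} {B : ℕ → 𝔸} {t : 𝕜}
    (hU : ∀ k, HasDerivAt (U k) (B k * U k t) t) (K : ℕ) :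
    HasDerivAt (fun s => descProd (U · s) K K)
      ((∑ k ∈ Icc 1 K, B k) * descProd (U · t) K K + commutatorSum (U · t) B K) t := by
  induction K with
  | zero => simpa [commutatorSum] using hasDerivAt_const t (1 : 𝔸)
  | succ K ih =>
    simp only [descProd_succ]
    refine ((hU (K + 1)).mul ih).congr_deriv ?_
    rw [commutatorSum_succ, Finset.sum_Icc_succ_top (by omega), Ring.lie_def]
    noncomm_ring

end Derivative

lemma hasDerivAt_exp_neg_I_mul_smul {𝔸 : Type*} [NormedRing 𝔸] [NormedAlgebra ℂ 𝔸]
    [CompleteSpace 𝔸] (A : 𝔸) (t : ℝ) :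
    HasDerivAt (fun s : ℝ => exp ((-(Complex.I * s)) • A))
      ((-Complex.I) • A * exp ((-(Complex.I * t)) • A)) t := by
  have hsmul : ∀ s : ℝ, (-(Complex.I * s)) • A = s • ((-Complex.I) • A) := fun s => by
    rw [← smul_assoc, Complex.real_smul, mul_neg, mul_comm]
  simp only [hsmul]
  exact hasDerivAt_exp_smul_const' (𝕂 := ℝ) _ t

theorem deriv_product_formula_general
    {E : Type*} [NormedAddCommGroup E] [InnerProductSpace ℂ E] [FiniteDimensional ℂ E]
    (K : ℕ) (A : ℕ → E →L[ℂ] E)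
    (H : E →L[ℂ] E) (hH : H = ∑ k ∈ Finset.Icc 1 K, A k)
    (S : ℝ → E →L[ℂ] E)
    (hS : ∀ t : ℝ,
      S t = ((List.range K).map fun m => exp ((-(Complex.I * t)) • A (K - m))).prod) :
    ∀ t : ℝ,
      HasDerivAt S
        ((-Complex.I) • (H * S t) +
          ∑ j ∈ Finset.Icc 2 K,
            ((List.range (K - j)).map fun m => exp ((-(Complex.I * t)) • A (K - m))).prod *
              ⁅exp ((-(Complex.I * t)) • A j),
                (-Complex.I) • ∑ ℓ ∈ Finset.Icc 1 (j - 1), A ℓ⁆ *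
              ((List.range (j - 1)).map fun m =>
                exp ((-(Complex.I * t)) • A (j - 1 - m))).prod)
        t := by
  intro t
  rw [funext hS, hH, ← smul_mul_assoc]
  simp_rw [Finset.smul_sum]
  exact hasDerivAt_descProd (fun k => hasDerivAt_exp_neg_I_mul_smul (A k) t) K

/-- **Derivative identity for a product of exponentials.**
For Hermitian `A_1, …, A_K` with `H = A_1 + ⋯ + A_K` and
`S(t) = e^{-itA_K} ⋯ e^{-itA_1}` (largest index furthest to the left), one has
`S'(t) = (−iH) S(t) + Σ_{j=2}^{K} (e^{-itA_K} ⋯ e^{-itA_{j+1}}) [e^{-itA_j}, −i Σ_{ℓ<j} A_ℓ]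
(e^{-itA_{j-1}} ⋯ e^{-itA_1})`. -/
theorem deriv_product_formula
    {E : Type*} [NormedAddCommGroup E] [InnerProductSpace ℂ E] [FiniteDimensional ℂ E]
    (K : ℕ) (A : ℕ → E →L[ℂ] E) (hA : ∀ k, IsSelfAdjoint (A k))
    (H : E →L[ℂ] E) (hH : H = ∑ k ∈ Finset.Icc 1 K, A k)
    (S : ℝ → E →L[ℂ] E)
    (hS : ∀ t : ℝ,
      S t = ((List.range K).map fun m => exp ((-(Complex.I * t)) • A (K - m))).prod) :
    ∀ t : ℝ,
      HasDerivAt S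
        ((-Complex.I) • (H * S t) +
          ∑ j ∈ Finset.Icc 2 K,
            ((List.range (K - j)).map fun m => exp ((-(Complex.I * t)) • A (K - m))).prod *
              ⁅exp ((-(Complex.I * t)) • A j),
                (-Complex.I) • ∑ ℓ ∈ Finset.Icc 1 (j - 1), A ℓ⁆ *
              ((List.range (j - 1)).map fun m =>
                exp ((-(Complex.I * t)) • A (j - 1 - m))).prod)
        t :=
  deriv_product_formula_general K A H hH S hS
end

section
/- For pairwise different sites i, j, k ∈ Λ and spin σ ∈ {↑,↓}, [h_{ijσ}, h̃_{jkσ}] = h_{ikσ}. -/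
/-- The hopping term `h_{ijσ} = a_{iσ}† a_{jσ} + a_{jσ}† a_{iσ}`. -/
noncomputable def hop {E : Type*} [NormedAddCommGroup E] [InnerProductSpace ℂ E]
    [CompleteSpace E] {Λ : Type*} (a : Λ → Bool → E →L[ℂ] E) (i j : Λ) (σ : Bool) :
    E →L[ℂ] E :=
  star (a i σ) * a j σ + star (a j σ) * a i σ

/-- The signed hopping term `h̃_{ijσ} = a_{iσ}† a_{jσ} − a_{jσ}† a_{iσ}`. -/
noncomputable def shop {E : Type*} [NormedAddCommGroup E] [InnerProductSpace ℂ E]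
    [CompleteSpace E] {Λ : Type*} (a : Λ → Bool → E →L[ℂ] E) (i j : Λ) (σ : Bool) :
    E →L[ℂ] E :=
  star (a i σ) * a j σ - star (a j σ) * a i σ

/-- The number operator `n_{iσ} = a_{iσ}† a_{iσ}`. -/
noncomputable def num {E : Type*} [NormedAddCommGroup E] [InnerProductSpace ℂ E]
    [CompleteSpace E] {Λ : Type*} (a : Λ → Bool → E →L[ℂ] E) (i : Λ) (σ : Bool) :
    E →L[ℂ] E :=
  star (a i σ) * a i σ

/-!
Fermionic bilinears close under commutators:
`⁅a_x† a_y, a_z† a_w⁆ = δ_{yz} a_x† a_w − δ_{wx} a_z† a_y`, which follows from a ring identity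
writing the commutator of two products through anticommutators. Expanding
`⁅h_{ij}, h̃_{jk}⁆` bilinearly, for pairwise different `i, j, k` only
`⁅a_i† a_j, a_j† a_k⁆ = a_i† a_k` and `-⁅a_j† a_i, a_k† a_j⁆ = a_k† a_i` survive.
-/

theorem lie_mul_mul_eq_anticommutators {R : Type*} [Ring R] (p q r s : R) :
    ⁅p * q, r * s⁆ = p * (q * r + r * q) * s - r * (s * p + p * s) * q
      + (p * r + r * p) * s * q - p * r * (q * s + s * q) := by
  rw [Ring.lie_def]
  noncomm_ring

theorem lie_star_mul_star_mul_of_car {R : Type*} [Ring R] [StarRing R]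
    {Λ : Type*} [DecidableEq Λ] {a : Λ → Bool → R}
    (car1 : ∀ (i j : Λ) (σ τ : Bool), a i σ * a j τ + a j τ * a i σ = 0)
    (car2 : ∀ (i j : Λ) (σ τ : Bool),
      a i σ * star (a j τ) + star (a j τ) * a i σ = if i = j ∧ σ = τ then 1 else 0)
    (i j k l : Λ) (σ τ : Bool) :
    ⁅star (a i σ) * a j σ, star (a k τ) * a l τ⁆ =
      (if j = k ∧ σ = τ then star (a i σ) * a l τ else 0)
        - if l = i ∧ τ = σ then star (a k τ) * a j σ else 0 := by
  have star_anticomm : star (a i σ) * star (a k τ) + star (a k τ) * star (a i σ) = 0 := by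
    simpa only [star_add, star_mul, star_zero, add_comm] using congrArg star (car1 i k σ τ)
  rw [lie_mul_mul_eq_anticommutators, car2, car2, star_anticomm, car1]
  split_ifs <;> simp

/-- **Commutator of a hopping with an adjacent signed hopping term** (Eq. (13c), case `i ≠ k`):
`[h_{ijσ}, h̃_{jkσ}] = h_{ikσ}` for pairwise different `i, j, k`. -/
theorem comm_hop_shop
    {E : Type*} [NormedAddCommGroup E] [InnerProductSpace ℂ E] [CompleteSpace E]
    {Λ : Type*} [DecidableEq Λ]
    (a : Λ → Bool → E →L[ℂ] E)
    (car1 : ∀ (i j : Λ) (σ τ : Bool), a i σ * a j τ + a j τ * a i σ = 0)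
    (car2 : ∀ (i j : Λ) (σ τ : Bool),
      a i σ * star (a j τ) + star (a j τ) * a i σ = if i = j ∧ σ = τ then 1 else 0)
    (i j k : Λ) (σ : Bool) (hij : i ≠ j) (hjk : j ≠ k) (hik : i ≠ k) :
    ⁅hop a i j σ, shop a j k σ⁆ = hop a i k σ := by
  -- `LieRing.ofAssociativeRing` is not a global instance; it supplies bilinearity of `⁅·, ·⁆`.
  let _ : LieRing (E →L[ℂ] E) := LieRing.ofAssociativeRing
  simp only [hop, shop, add_lie, lie_sub, lie_star_mul_star_mul_of_car car1 car2]
  simp [hij, hjk, hik, hij.symm, hjk.symm, hik.symm]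
end

section
/- For the decomposition of the one-dimensional Fermi-Hubbard Hamiltonian, [H_2, H_1] = v² Σ_{i∈Λ'} Σ_{σ∈{↑,↓}} ( h̃_{i−1,i+1,σ} − h̃_{i,i+2,σ} ). -/
/-- The "even-odd" kinetic term `H₁ = v Σ_{i∈Λ'} Σ_σ h_{i,i+1,σ}` of the one-dimensional
Fermi-Hubbard Hamiltonian, with `Λ' = {0, 2, …, L−2} ⊂ ℤ/Lℤ` and spin `↑ = true`, `↓ = false`. -/
noncomputable def FH1 {E : Type*} [NormedAddCommGroup E] [InnerProductSpace ℂ E]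
    [CompleteSpace E] {L : ℕ} (a : ZMod L → Bool → E →L[ℂ] E) (v : ℝ) : E →L[ℂ] E :=
  (v : ℂ) • ∑ i ∈ Finset.range (L / 2), ∑ σ : Bool,
    hop a ((2 * i : ℕ) : ZMod L) (((2 * i : ℕ) : ZMod L) + 1) σ

/-- The "odd-even" kinetic term `H₂ = v Σ_{i∈Λ'} Σ_σ h_{i−1,i,σ}`. -/
noncomputable def FH2 {E : Type*} [NormedAddCommGroup E] [InnerProductSpace ℂ E]
    [CompleteSpace E] {L : ℕ} (a : ZMod L → Bool → E →L[ℂ] E) (v : ℝ) : E →L[ℂ] E :=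
  (v : ℂ) • ∑ i ∈ Finset.range (L / 2), ∑ σ : Bool,
    hop a (((2 * i : ℕ) : ZMod L) - 1) ((2 * i : ℕ) : ZMod L) σ

/-- The interaction term `H₃ = u Σ_{i∈Λ'} (n_{i↑}n_{i↓} + n_{i+1,↑}n_{i+1,↓})`. -/
noncomputable def FH3 {E : Type*} [NormedAddCommGroup E] [InnerProductSpace ℂ E]
    [CompleteSpace E] {L : ℕ} (a : ZMod L → Bool → E →L[ℂ] E) (u : ℝ) : E →L[ℂ] E :=
  (u : ℂ) • ∑ i ∈ Finset.range (L / 2),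
    (num a ((2 * i : ℕ) : ZMod L) true * num a ((2 * i : ℕ) : ZMod L) false +
      num a (((2 * i : ℕ) : ZMod L) + 1) true * num a (((2 * i : ℕ) : ZMod L) + 1) false)

/-!
The CAR give `⁅a†ᵢ aⱼ, a†ₖ aₗ⁆ = δⱼₖ a†ᵢ aₗ - δₗᵢ a†ₖ aⱼ` (spins must agree as well). Hence two bonds
`(p, q)`, `(r, s)` with `p ≠ r`, `q ≠ s` have commutator `δ_qr h̃_ps + δ_ps h̃_qr`. Since `L` is even,
the bond `(2i - 1, 2i)` of `H₂` meets exactly two bonds of `H₁`, namely `(2i, 2i + 1)` and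
`(2i - 2, 2i - 1)`, and these produce the two next-nearest-neighbour terms.
-/

section Commutators

-- Mathlib keeps the commutator Lie ring of an associative ring a local instance.
attribute [local instance] LieRing.ofAssociativeRing

structure IsCAR {R : Type*} [Ring R] [StarRing R] {Λ : Type*} [DecidableEq Λ]
    (a : Λ → Bool → R) : Prop where
  anticomm : ∀ i j σ τ, a i σ * a j τ + a j τ * a i σ = 0
  anticomm_star : ∀ i j σ τ,
    a i σ * star (a j τ) + star (a j τ) * a i σ = if i = j ∧ σ = τ then 1 else 0

namespace IsCAR

variable {R : Type*} [Ring R] [StarRing R] {Λ : Type*} [DecidableEq Λ] {a : Λ → Bool → R}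

theorem star_anticomm (h : IsCAR a) (i j : Λ) (σ τ : Bool) :
    star (a i σ) * star (a j τ) + star (a j τ) * star (a i σ) = 0 := by
  simpa [star_add, star_mul] using congrArg star (h.anticomm j i τ σ)

theorem lie_star_mul_star_mul (h : IsCAR a) (i j k l : Λ) (σ τ : Bool) :
    ⁅star (a i σ) * a j σ, star (a k τ) * a l τ⁆ =
      (if j = k ∧ σ = τ then star (a i σ) * a l τ else 0) -
        (if l = i ∧ τ = σ then star (a k τ) * a j σ else 0) := by
  have expand : ∀ A B C D : R, ⁅A * B, C * D⁆ =
      A * ((B * C + C * B) * D) - A * (C * (B * D + D * B)) + (A * C + C * A) * (D * B)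
        - C * ((D * A + A * D) * B) := by
    intro A B C D; rw [Ring.lie_def]; noncomm_ring
  rw [expand, h.anticomm_star j k, h.anticomm j l, h.star_anticomm, h.anticomm_star l i]
  split_ifs <;> simp

end IsCAR

section Hopping

theorem shop_swap {E : Type*} [NormedAddCommGroup E] [InnerProductSpace ℂ E] [CompleteSpace E]
    {Λ : Type*} (a : Λ → Bool → E →L[ℂ] E) (i j : Λ) (σ : Bool) :
    shop a j i σ = -shop a i j σ := by
  simp [shop]

variable {E : Type*} [NormedAddCommGroup E] [InnerProductSpace ℂ E] [CompleteSpace E]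
  {Λ : Type*} [DecidableEq Λ] {a : Λ → Bool → E →L[ℂ] E}

theorem lie_hop_hop (h : IsCAR a) {p q r s : Λ} (hpr : p ≠ r) (hqs : q ≠ s) (σ τ : Bool) :
    ⁅hop a p q σ, hop a r s τ⁆ =
      if σ = τ then (if q = r then shop a p s σ else 0) + (if p = s then shop a q r σ else 0)
      else 0 := by
  rw [hop, hop, add_lie, lie_add, lie_add, h.lie_star_mul_star_mul, h.lie_star_mul_star_mul,
    h.lie_star_mul_star_mul, h.lie_star_mul_star_mul]
  by_cases hστ : σ = τ
  · subst hστ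
    simp only [and_true, if_neg hpr, if_neg hpr.symm, if_neg hqs, if_neg hqs.symm, sub_zero,
      add_zero, @eq_comm _ s p, @eq_comm _ r q, shop]
    split_ifs <;> abel
  · simp [hστ, Ne.symm hστ]

theorem sum_lie_hop_hop (h : IsCAR a) {p q r s : Λ} (hpr : p ≠ r) (hqs : q ≠ s) (τ : Bool) :
    ∑ σ : Bool, ⁅hop a p q σ, hop a r s τ⁆ =
      (if q = r then shop a p s τ else 0) + (if p = s then shop a q r τ else 0) := by
  simp_rw [lie_hop_hop h hpr hqs, Finset.sum_ite_eq', Finset.mem_univ, if_true]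

end Hopping

section EvenSites

variable {L : ℕ}

theorem natCast_two_mul_ne_add_one (hL : Even L) (i j : ℕ) :
    ((2 * i : ℕ) : ZMod L) ≠ ((2 * j : ℕ) : ZMod L) + 1 := by
  rw [Ne, ← Nat.cast_succ]
  intro hij
  have hmod2 := congrArg (ZMod.castHom (even_iff_two_dvd.mp hL) (ZMod 2)) hij
  rw [map_natCast, map_natCast, ZMod.natCast_eq_natCast_iff'] at hmod2
  omega

theorem eq_of_natCast_two_mul_eq {i j : ℕ} (hi : i < L / 2) (hj : j < L / 2)
    (hij : ((2 * i : ℕ) : ZMod L) = ((2 * j : ℕ) : ZMod L)) : i = j := by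
  rw [ZMod.natCast_eq_natCast_iff', Nat.mod_eq_of_lt (by omega), Nat.mod_eq_of_lt (by omega)]
    at hij
  omega

theorem natCast_two_mul_succ_mod (hL : Even L) (j : ℕ) :
    ((2 * ((j + 1) % (L / 2)) : ℕ) : ZMod L) = ((2 * j : ℕ) : ZMod L) + 2 := by
  obtain ⟨M, rfl⟩ := hL
  rw [← Nat.mul_mod_mul_left, show 2 * ((M + M) / 2) = M + M by omega, ZMod.natCast_mod]
  push_cast; ring

end EvenSites

theorem lie_FH2_sum_hop {E : Type*} [NormedAddCommGroup E] [InnerProductSpace ℂ E]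
    [CompleteSpace E] {L : ℕ} (hL : Even L) {a : ZMod L → Bool → E →L[ℂ] E} (h : IsCAR a)
    {j : ℕ} (hj : j < L / 2) (τ : Bool) :
    ⁅∑ i ∈ Finset.range (L / 2), ∑ σ : Bool,
        hop a (((2 * i : ℕ) : ZMod L) - 1) ((2 * i : ℕ) : ZMod L) σ,
      hop a ((2 * j : ℕ) : ZMod L) (((2 * j : ℕ) : ZMod L) + 1) τ⁆ =
      shop a (((2 * j : ℕ) : ZMod L) - 1) (((2 * j : ℕ) : ZMod L) + 1) τ -
        shop a ((2 * j : ℕ) : ZMod L) (((2 * j : ℕ) : ZMod L) + 2) τ := by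
  set e : ℕ → ZMod L := fun i ↦ ((2 * i : ℕ) : ZMod L)
  have hsucc : e ((j + 1) % (L / 2)) = e j + 2 := natCast_two_mul_succ_mod hL j
  have hj' : (j + 1) % (L / 2) < L / 2 := Nat.mod_lt _ (by omega)
  calc _ = ∑ i ∈ Finset.range (L / 2),
          ((if e i = e j then shop a (e i - 1) (e j + 1) τ else 0) +
            (if e i - 1 = e j + 1 then shop a (e i) (e j) τ else 0)) := by
        rw [sum_lie]
        refine Finset.sum_congr rfl fun i _ ↦ ?_
        have hne : e i ≠ e j + 1 := natCast_two_mul_ne_add_one hL i j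
        rw [sum_lie]
        exact sum_lie_hop_hop h (fun h' ↦ hne (sub_eq_iff_eq_add.1 h')) hne τ
    _ = shop a (e j - 1) (e j + 1) τ + shop a (e j + 2) (e j) τ := by
        rw [Finset.sum_add_distrib, Finset.sum_eq_single_of_mem j (Finset.mem_range.2 hj),
          Finset.sum_eq_single_of_mem _ (Finset.mem_range.2 hj'), if_pos rfl, hsucc,
          if_pos (by ring)]
        · intro i hi hij
          refine if_neg ?_
          rw [sub_eq_iff_eq_add, add_assoc, one_add_one_eq_two, ← hsucc]
          exact fun h ↦ hij (eq_of_natCast_two_mul_eq (Finset.mem_range.1 hi) hj' h)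
        · intro i hi hij
          exact if_neg fun h ↦ hij (eq_of_natCast_two_mul_eq (Finset.mem_range.1 hi) hj h)
    _ = _ := by rw [shop_swap a (e j), ← sub_eq_add_neg]

end Commutators

theorem comm_FH2_FH1_general
    {E : Type*} [NormedAddCommGroup E] [InnerProductSpace ℂ E] [CompleteSpace E]
    {L : ℕ} (hL : Even L)
    (a : ZMod L → Bool → E →L[ℂ] E)
    (car1 : ∀ (i j : ZMod L) (σ τ : Bool), a i σ * a j τ + a j τ * a i σ = 0)
    (car2 : ∀ (i j : ZMod L) (σ τ : Bool),
      a i σ * star (a j τ) + star (a j τ) * a i σ = if i = j ∧ σ = τ then 1 else 0)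
    (v : ℝ) :
    ⁅FH2 a v, FH1 a v⁆
      = ((v : ℂ) ^ 2) • ∑ i ∈ Finset.range (L / 2), ∑ σ : Bool,
          (shop a (((2 * i : ℕ) : ZMod L) - 1) (((2 * i : ℕ) : ZMod L) + 1) σ -
            shop a ((2 * i : ℕ) : ZMod L) (((2 * i : ℕ) : ZMod L) + 2) σ) := by
  let : LieRing (E →L[ℂ] E) := LieRing.ofAssociativeRing
  rw [FH2, FH1, smul_lie, lie_smul, smul_smul, ← sq, lie_sum]
  congr 1
  refine Finset.sum_congr rfl fun j hj ↦ ?_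
  rw [lie_sum]
  exact Finset.sum_congr rfl fun τ _ ↦
    lie_FH2_sum_hop hL ⟨car1, car2⟩ (Finset.mem_range.1 hj) τ

/-- **Commutator of the two kinetic terms of the 1D Fermi-Hubbard Hamiltonian:**
`[H₂, H₁] = v² Σ_{i∈Λ'} Σ_σ (h̃_{i−1,i+1,σ} − h̃_{i,i+2,σ})`. -/
theorem comm_FH2_FH1
    {E : Type*} [NormedAddCommGroup E] [InnerProductSpace ℂ E] [CompleteSpace E]
    {L : ℕ} (hL : Even L) (hL6 : 6 ≤ L)
    (a : ZMod L → Bool → E →L[ℂ] E)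
    (car1 : ∀ (i j : ZMod L) (σ τ : Bool), a i σ * a j τ + a j τ * a i σ = 0)
    (car2 : ∀ (i j : ZMod L) (σ τ : Bool),
      a i σ * star (a j τ) + star (a j τ) * a i σ = if i = j ∧ σ = τ then 1 else 0)
    (v u : ℝ) :
    ⁅FH2 a v, FH1 a v⁆
      = ((v : ℂ) ^ 2) • ∑ i ∈ Finset.range (L / 2), ∑ σ : Bool,
          (shop a (((2 * i : ℕ) : ZMod L) - 1) (((2 * i : ℕ) : ZMod L) + 1) σ -
            shop a ((2 * i : ℕ) : ZMod L) (((2 * i : ℕ) : ZMod L) + 2) σ) :=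
  comm_FH2_FH1_general hL a car1 car2 v
end

section
/- For the decomposition of the one-dimensional Fermi-Hubbard Hamiltonian, [H_3, H_1] = vu Σ_{i∈Λ'} Σ_{σ∈{↑,↓}} h̃_{i,i+1,σ} · ( n_{i,σ̄} − n_{i+1,σ̄} ) and [H_3, H_2] = vu Σ_{i∈Λ'} Σ_{σ∈{↑,↓}} h̃_{i−1,i,σ} · ( n_{i−1,σ̄} − n_{i,σ̄} ), where σ̄ denotes the flipped spin. -/
/-!
Since `L` is even, the sites `2i` and `2i + 1` with `i < L / 2` run through `ℤ/Lℤ` exactly once, so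
`H₃ = u Σ_k n_{k↑} n_{k↓}` is the total double occupancy. The canonical anticommutation relations
give `[n_k, a_i† a_j] = (δ_{ik} − δ_{jk}) a_i† a_j` for modes of one spin, while modes of the other
spin commute with `a_i† a_j`; hence `[n_{k↑} n_{k↓}, a_{iσ}† a_{jσ}] = (δ_{ik} − δ_{jk})
a_{iσ}† a_{jσ} n_{kσ̄}`, and summing over `k` gives `[Σ_k n_{k↑} n_{k↓}, h_{ijσ}] =
h̃_{ijσ} (n_{iσ̄} − n_{jσ̄})` for every pair of sites.
-/

open Finset

section

-- Local, so that the bracket of the final theorem elaborates exactly as in its statement.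
attribute [local instance] LieRing.ofAssociativeRing

namespace Ring

variable {R : Type*} [Ring R]

theorem lie_mul (x y z : R) : ⁅x, y * z⁆ = ⁅x, y⁆ * z + y * ⁅x, z⁆ := by
  simp only [lie_def]; noncomm_ring

theorem mul_lie (x y z : R) : ⁅x * y, z⁆ = x * ⁅y, z⁆ + ⁅x, z⁆ * y := by
  simp only [lie_def]; noncomm_ring

end Ring

/-- Canonical anticommutation relations. -/
structure IsCAR_s16 {R ι : Type*} [Ring R] [StarRing R] [DecidableEq ι] (c : ι → R) : Prop where
  anticomm : ∀ i j, c i * c j + c j * c i = 0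
  anticomm_star : ∀ i j, c i * star (c j) + star (c j) * c i = if i = j then 1 else 0

namespace IsCAR_s16

variable {R ι : Type*} [Ring R] [StarRing R] [DecidableEq ι] {c : ι → R}

theorem lie_number_annihilator (hc : IsCAR_s16 c) (k j : ι) :
    ⁅star (c k) * c k, c j⁆ = -(if j = k then c j else 0) := by
  calc ⁅star (c k) * c k, c j⁆
      = star (c k) * (c k * c j + c j * c k) - (c j * star (c k) + star (c k) * c j) * c k := by
        rw [Ring.lie_def]; noncomm_ring
    _ = -(if j = k then c j else 0) := by
        rw [hc.anticomm, hc.anticomm_star]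
        split_ifs with h
        · subst h; simp
        · simp

theorem lie_number_creator (hc : IsCAR_s16 c) (k i : ι) :
    ⁅star (c k) * c k, star (c i)⁆ = if i = k then star (c i) else 0 := by
  calc ⁅star (c k) * c k, star (c i)⁆
      = star (c k) * (c k * star (c i) + star (c i) * c k)
          - star (c i * c k + c k * c i) * c k := by
        rw [Ring.lie_def, star_add, star_mul, star_mul]; noncomm_ring
    _ = if i = k then star (c i) else 0 := by
        rw [hc.anticomm, hc.anticomm_star, star_zero, zero_mul, sub_zero]
        obtain rfl | h := eq_or_ne i k
        · simp
        · simp [h, h.symm]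

theorem lie_number_hopping (hc : IsCAR_s16 c) (k i j : ι) :
    ⁅star (c k) * c k, star (c i) * c j⁆
      = (if i = k then star (c i) * c j else 0) - (if j = k then star (c i) * c j else 0) := by
  rw [Ring.lie_mul, hc.lie_number_creator, hc.lie_number_annihilator]
  simp only [ite_mul, zero_mul, mul_neg, mul_ite, mul_zero, sub_eq_add_neg]

end IsCAR_s16

section Hubbard

variable {E : Type*} [NormedAddCommGroup E] [InnerProductSpace ℂ E] [CompleteSpace E]
  {Λ : Type*} [DecidableEq Λ] {a : Λ → Bool → E →L[ℂ] E}

theorem lie_num_hopping (ha : IsCAR_s16 (Function.uncurry a)) (k : Λ) (τ : Bool) (i j : Λ)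
    (σ : Bool) :
    ⁅num a k τ, star (a i σ) * a j σ⁆
      = if σ = τ then
          (if i = k then star (a i σ) * a j σ else 0) - (if j = k then star (a i σ) * a j σ else 0)
        else 0 := by
  have h := ha.lie_number_hopping (k, τ) (i, σ) (j, σ)
  simp only [Function.uncurry_apply_pair, Prod.mk.injEq] at h
  rw [num, h]
  by_cases hστ : σ = τ <;> simp [hστ]

theorem lie_num_mul_num_hopping (ha : IsCAR_s16 (Function.uncurry a)) (k i j : Λ) (σ : Bool) :
    ⁅num a k true * num a k false, star (a i σ) * a j σ⁆
      = (if i = k then star (a i σ) * a j σ * num a k (!σ) else 0)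
        - (if j = k then star (a i σ) * a j σ * num a k (!σ) else 0) := by
  rw [Ring.mul_lie, lie_num_hopping ha, lie_num_hopping ha]
  cases σ
  · have hcomm : num a k true * (star (a i false) * a j false)
        = star (a i false) * a j false * num a k true := by
      simpa [Ring.lie_def, sub_eq_zero] using lie_num_hopping ha k true i j false
    simp [mul_sub, mul_ite, hcomm]
  · simp [sub_mul, ite_mul]

theorem lie_sum_num_mul_num_hop [Fintype Λ] (ha : IsCAR_s16 (Function.uncurry a)) (i j : Λ)
    (σ : Bool) :
    ⁅∑ k, num a k true * num a k false, hop a i j σ⁆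
      = shop a i j σ * (num a i (!σ) - num a j (!σ)) := by
  simp only [hop, shop, sum_lie, lie_add, lie_num_mul_num_hopping ha,
    sum_sub_distrib, Fintype.sum_ite_eq]
  noncomm_ring

theorem lie_smul_sum_num_mul_num_smul_sum_hop [Fintype Λ] (ha : IsCAR_s16 (Function.uncurry a))
    {ι : Type*} (s : Finset ι) (p q : ι → Λ) (c d : ℂ) :
    ⁅c • ∑ k, num a k true * num a k false, d • ∑ x ∈ s, ∑ σ, hop a (p x) (q x) σ⁆
      = (d * c) • ∑ x ∈ s, ∑ σ, shop a (p x) (q x) σ * (num a (p x) (!σ) - num a (q x) (!σ)) := by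
  rw [smul_lie, lie_smul, smul_smul, mul_comm c d]
  simp only [lie_sum, lie_sum_num_mul_num_hop ha]

end Hubbard

end

theorem Finset.sum_range_pairs_eq_sum_range_two_mul {M : Type*} [AddCommMonoid M] (f : ℕ → M)
    (n : ℕ) :
    ∑ i ∈ range n, (f (2 * i) + f (2 * i + 1)) = ∑ k ∈ range (2 * n), f k := by
  induction n with
  | zero => simp
  | succ n ih => rw [sum_range_succ, ih, show 2 * (n + 1) = 2 * n + 1 + 1 by ring,
      sum_range_succ, sum_range_succ, add_assoc]

theorem ZMod.sum_range_natCast {M : Type*} [AddCommMonoid M] (L : ℕ) [NeZero L]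
    (g : ZMod L → M) : ∑ k ∈ range L, g k = ∑ k, g k :=
  sum_nbij' (↑) ZMod.val (by simp) (by simp [ZMod.val_lt])
    (fun _ hk => ZMod.val_cast_of_lt (mem_range.1 hk)) (fun x _ => ZMod.natCast_zmod_val x)
    (fun _ _ => rfl)

theorem FH3_eq_smul_sum_num_mul_num {E : Type*} [NormedAddCommGroup E] [InnerProductSpace ℂ E]
    [CompleteSpace E] {L : ℕ} [NeZero L] (hL : Even L) (a : ZMod L → Bool → E →L[ℂ] E) (u : ℝ) :
    FH3 a u = (u : ℂ) • ∑ k, num a k true * num a k false := by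
  have hpairs := Finset.sum_range_pairs_eq_sum_range_two_mul
    (fun k : ℕ => num a (k : ZMod L) true * num a (k : ZMod L) false) (L / 2)
  simp only [Nat.two_mul_div_two_of_even hL, Nat.cast_add, Nat.cast_one] at hpairs
  rw [FH3, ← ZMod.sum_range_natCast, ← hpairs]

theorem comm_FH3_kinetic_1d_general
    {E : Type*} [NormedAddCommGroup E] [InnerProductSpace ℂ E] [CompleteSpace E]
    {L : ℕ} (hL : Even L)
    (a : ZMod L → Bool → E →L[ℂ] E)
    (car1 : ∀ (i j : ZMod L) (σ τ : Bool), a i σ * a j τ + a j τ * a i σ = 0)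
    (car2 : ∀ (i j : ZMod L) (σ τ : Bool),
      a i σ * star (a j τ) + star (a j τ) * a i σ = if i = j ∧ σ = τ then 1 else 0)
    (v u : ℝ) :
    ⁅FH3 a u, FH1 a v⁆
      = ((v : ℂ) * (u : ℂ)) • ∑ i ∈ Finset.range (L / 2), ∑ σ : Bool,
          shop a ((2 * i : ℕ) : ZMod L) (((2 * i : ℕ) : ZMod L) + 1) σ *
            (num a ((2 * i : ℕ) : ZMod L) (!σ) - num a (((2 * i : ℕ) : ZMod L) + 1) (!σ)) ∧
    ⁅FH3 a u, FH2 a v⁆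
      = ((v : ℂ) * (u : ℂ)) • ∑ i ∈ Finset.range (L / 2), ∑ σ : Bool,
          shop a (((2 * i : ℕ) : ZMod L) - 1) ((2 * i : ℕ) : ZMod L) σ *
            (num a (((2 * i : ℕ) : ZMod L) - 1) (!σ) - num a ((2 * i : ℕ) : ZMod L) (!σ)) := by
  obtain rfl | hL0 := eq_or_ne L 0
  · simp [FH1, FH2, FH3, Ring.lie_def]
  have : NeZero L := ⟨hL0⟩
  have ha : IsCAR_s16 (Function.uncurry a) :=
    ⟨fun ⟨i, σ⟩ ⟨j, τ⟩ => car1 i j σ τ,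
      fun ⟨i, σ⟩ ⟨j, τ⟩ => by
        simpa only [Function.uncurry_apply_pair, Prod.mk.injEq] using car2 i j σ τ⟩
  rw [FH3_eq_smul_sum_num_mul_num hL]
  exact ⟨lie_smul_sum_num_mul_num_smul_sum_hop ha _ _ _ _ _,
    lie_smul_sum_num_mul_num_smul_sum_hop ha _ _ _ _ _⟩

/-- **Commutators of the interaction term with the kinetic terms of the 1D Fermi-Hubbard
Hamiltonian:** `[H₃,H₁] = vu Σ_{i∈Λ'} Σ_σ h̃_{i,i+1,σ}·(n_{i,σ̄} − n_{i+1,σ̄})` and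
`[H₃,H₂] = vu Σ_{i∈Λ'} Σ_σ h̃_{i−1,i,σ}·(n_{i−1,σ̄} − n_{i,σ̄})`, with `σ̄` the flipped spin. -/
theorem comm_FH3_kinetic_1d
    {E : Type*} [NormedAddCommGroup E] [InnerProductSpace ℂ E] [CompleteSpace E]
    {L : ℕ} (hL : Even L) (hL6 : 6 ≤ L)
    (a : ZMod L → Bool → E →L[ℂ] E)
    (car1 : ∀ (i j : ZMod L) (σ τ : Bool), a i σ * a j τ + a j τ * a i σ = 0)
    (car2 : ∀ (i j : ZMod L) (σ τ : Bool),
      a i σ * star (a j τ) + star (a j τ) * a i σ = if i = j ∧ σ = τ then 1 else 0)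
    (v u : ℝ) :
    ⁅FH3 a u, FH1 a v⁆
      = ((v : ℂ) * (u : ℂ)) • ∑ i ∈ Finset.range (L / 2), ∑ σ : Bool,
          shop a ((2 * i : ℕ) : ZMod L) (((2 * i : ℕ) : ZMod L) + 1) σ *
            (num a ((2 * i : ℕ) : ZMod L) (!σ) - num a (((2 * i : ℕ) : ZMod L) + 1) (!σ)) ∧
    ⁅FH3 a u, FH2 a v⁆
      = ((v : ℂ) * (u : ℂ)) • ∑ i ∈ Finset.range (L / 2), ∑ σ : Bool,
          shop a (((2 * i : ℕ) : ZMod L) - 1) ((2 * i : ℕ) : ZMod L) σ *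
            (num a (((2 * i : ℕ) : ZMod L) - 1) (!σ) - num a ((2 * i : ℕ) : ZMod L) (!σ)) :=
  comm_FH3_kinetic_1d_general hL a car1 car2 v u
end
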